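/- arXiv:math/0505129 — 8 statements merged into one kernel-verified Lean document; each statement's English description precedes it below -/
import Mathlib

section
/- Let a and b be relatively prime positive integers, and let b⁻¹ and a⁻¹ be integers satisfying b⁻¹·b ≡ 1 (mod a) and a⁻¹·a ≡ 1 (mod b). Then for every nonnegative integer n, the number of pairs (x,y) ∈ ℤ₊² with ax + by = n equals n/(ab) − {b⁻¹n/a} − {a⁻¹n/b} + 1, where {t} denotes the fractional part of the real number t (Popoviciu's formula). -/
set_option maxHeartbeats 1000000

/-- **Popoviciu's formula.** If `a` and `b` are relatively prime positive integers and
`binv`, `ainv` are integers with `binv * b ≡ 1 (mod a)` and `ainv * a ≡ 1 (mod b)`, then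
for every nonnegative integer `n`, the number of pairs `(x, y)` of nonnegative integers
with `a*x + b*y = n` equals `n/(a*b) - {binv*n/a} - {ainv*n/b} + 1`, where `{t}` denotes
the fractional part of the real number `t`. -/
theorem popoviciu_formula (a b : ℕ) (ha : 0 < a) (hb : 0 < b) (hab : Nat.Coprime a b)
    (binv ainv : ℤ) (hbinv : (a : ℤ) ∣ binv * (b : ℤ) - 1) (hainv : (b : ℤ) ∣ ainv * (a : ℤ) - 1)
    (n : ℕ) :
    (Nat.card {p : ℕ × ℕ // a * p.1 + b * p.2 = n} : ℝ) =
      (n : ℝ) / ((a : ℝ) * (b : ℝ))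
        - Int.fract (((binv * (n : ℤ) : ℤ) : ℝ) / (a : ℝ))
        - Int.fract (((ainv * (n : ℤ) : ℤ) : ℝ) / (b : ℝ)) + 1 := by
  have ha' : (0:ℤ) < a := by exact_mod_cast ha
  have hb' : (0:ℤ) < b := by exact_mod_cast hb
  set x0 : ℤ := (ainv * n) % b with hx0def
  set y0 : ℤ := (binv * n) % a with hy0def
  have hx0nn : 0 ≤ x0 := Int.emod_nonneg _ hb'.ne'
  have hx0lt : x0 < b := Int.emod_lt_of_pos _ hb'
  have hy0nn : 0 ≤ y0 := Int.emod_nonneg _ ha'.ne'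
  have hy0lt : y0 < a := Int.emod_lt_of_pos _ ha'
  -- divisibilities
  have hdx : (b:ℤ) ∣ ainv * n - x0 := Int.dvd_self_sub_of_emod_eq rfl
  have hdy : (a:ℤ) ∣ binv * n - y0 := Int.dvd_self_sub_of_emod_eq rfl
  have hbd : (b:ℤ) ∣ (n:ℤ) - a * x0 := by
    have h1 : (b:ℤ) ∣ (n:ℤ) - a * (ainv * n) := by
      have := hainv.mul_right (n:ℤ)
      have : (b:ℤ) ∣ -((ainv * a - 1) * n) := (dvd_neg).mpr this
      convert this using 1; ring
    have h2 : (b:ℤ) ∣ a * (ainv * n - x0) := Dvd.dvd.mul_left hdx _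
    have := dvd_add h1 h2
    convert this using 1; rfl; ring
  have had : (a:ℤ) ∣ (n:ℤ) - b * y0 := by
    have h1 : (a:ℤ) ∣ (n:ℤ) - b * (binv * n) := by
      have := hbinv.mul_right (n:ℤ)
      have : (a:ℤ) ∣ -((binv * b - 1) * n) := (dvd_neg).mpr this
      convert this using 1; ring
    have h2 : (a:ℤ) ∣ b * (binv * n - y0) := Dvd.dvd.mul_left hdy _
    have := dvd_add h1 h2
    convert this using 1; rfl; ring
  have hcop : IsCoprime (a:ℤ) (b:ℤ) := Nat.isCoprime_iff_coprime.mpr hab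
  have habd : ((a:ℤ) * b) ∣ (n:ℤ) - a * x0 - b * y0 := by
    apply hcop.mul_dvd
    · have : (a:ℤ) ∣ ((n:ℤ) - b * y0) - a * x0 := dvd_sub had ⟨x0, rfl⟩
      convert this using 1; rfl; ring
    · have : (b:ℤ) ∣ ((n:ℤ) - a * x0) - b * y0 := dvd_sub hbd ⟨y0, rfl⟩
      exact this
  obtain ⟨K, hK⟩ := habd
  have hab0 : (0:ℤ) < (a:ℤ) * b := mul_pos ha' hb'
  have hKge : -1 ≤ K := by
    by_contra h
    push_neg at h
    have hK2 : K ≤ -2 := by omega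
    have hn0 : (0:ℤ) ≤ n := Int.natCast_nonneg n
    nlinarith [mul_le_mul_of_nonneg_left hx0lt.le ha'.le,
      mul_le_mul_of_nonneg_left hy0lt.le hb'.le,
      mul_le_mul_of_nonneg_left hK2 hab0.le]
  set m : ℕ := (K + 1).toNat with hmdef
  have hmK : (m : ℤ) = K + 1 := Int.toNat_of_nonneg (by omega)
  -- counting
  have hcard : Nat.card {p : ℕ × ℕ // a * p.1 + b * p.2 = n} = m := by
    have key : ∀ t : Fin m,
        a * (x0 + b * t).toNat + b * (y0 + a * (K - t)).toNat = n := by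
      intro t
      have ht : (t:ℤ) ≤ K := by
        have := t.2
        omega
      have hxnn : 0 ≤ x0 + b * t := by positivity
      have hynn : 0 ≤ y0 + a * (K - t) := by
        have : 0 ≤ (a:ℤ) * (K - t) := mul_nonneg ha'.le (by omega)
        omega
      have : ((a * (x0 + b * t).toNat + b * (y0 + a * (K - t)).toNat : ℕ) : ℤ) = (n:ℤ) := by
        push_cast [Int.toNat_of_nonneg hxnn, Int.toNat_of_nonneg hynn]
        linarith [hK]
      exact_mod_cast this
    let g : Fin m → {p : ℕ × ℕ // a * p.1 + b * p.2 = n} :=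
      fun t => ⟨((x0 + b * t).toNat, (y0 + a * (K - t)).toNat), key t⟩
    have hg : Function.Bijective g := by
      constructor
      · intro t1 t2 h
        have h1 : (x0 + b * (t1:ℤ)).toNat = (x0 + b * (t2:ℤ)).toNat := by
          simpa [g] using congrArg (fun p => p.1.1) h
        have e1 : 0 ≤ x0 + b * (t1:ℤ) := by positivity
        have e2 : 0 ≤ x0 + b * (t2:ℤ) := by positivity
        have : x0 + b * (t1:ℤ) = x0 + b * (t2:ℤ) := by omega
        have : (t1:ℤ) = (t2:ℤ) := by
          have := mul_left_cancel₀ hb'.ne' (by linarith : (b:ℤ) * t1 = b * t2)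
          exact this
        exact Fin.ext (by exact_mod_cast this)
      · rintro ⟨⟨x, y⟩, hxy⟩
        have hxy' : (a:ℤ) * x + b * y = n := by exact_mod_cast hxy
        have hdvd : (b:ℤ) ∣ (x:ℤ) - x0 := by
          have h1 : (b:ℤ) ∣ (x:ℤ) - ainv * n := by
            have hh : (x:ℤ) - ainv * n = -((ainv * a - 1) * x) - ainv * (b * y) := by
              rw [← hxy']; ring
            rw [hh]
            exact dvd_sub ((dvd_neg).mpr (hainv.mul_right _)) ⟨ainv * y, by ring⟩
          have := dvd_add h1 hdx
          convert this using 1; rfl; ring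
        obtain ⟨t, ht⟩ := hdvd
        have htnn : 0 ≤ t := by
          by_contra h
          push_neg at h
          have h1 : t ≤ -1 := by omega
          have h2 : (b:ℤ) * t ≤ b * (-1) := mul_le_mul_of_nonneg_left h1 hb'.le
          have h3 : (0:ℤ) ≤ x := Int.natCast_nonneg x
          linarith
        have hyeq : (y:ℤ) = y0 + a * (K - t) := by
          have hx : (x:ℤ) = x0 + b * t := by linarith
          have : (b:ℤ) * y = b * (y0 + a * (K - t)) := by
            have : (b:ℤ) * y = n - a * x := by linarith
            rw [this, hx]
            nlinarith [hK]
          exact mul_left_cancel₀ hb'.ne' this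
        have htK : t ≤ K := by
          have hy' : (0:ℤ) ≤ y := Int.natCast_nonneg y
          have : 0 ≤ y0 + a * (K - t) := by omega
          nlinarith
        have htm : t.toNat < m := by omega
        refine ⟨⟨t.toNat, htm⟩, ?_⟩
        apply Subtype.ext
        have htt : ((t.toNat : ℕ) : ℤ) = t := Int.toNat_of_nonneg htnn
        have hx : (x:ℤ) = x0 + b * t := by linarith
        have c1 : (x0 + b * ((t.toNat : ℕ) : ℤ)).toNat = x := by
          rw [htt, ← hx, Int.toNat_natCast]
        have c2 : (y0 + a * (K - ((t.toNat : ℕ) : ℤ))).toNat = y := by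
          rw [htt, ← hyeq, Int.toNat_natCast]
        simp only [g]
        exact Prod.ext c1 c2
    have := Nat.card_eq_of_bijective g hg
    simpa using this.symm
  rw [hcard]
  -- fract computations
  have hfa : Int.fract (((binv * (n : ℤ) : ℤ) : ℝ) / (a : ℝ)) = (y0 : ℝ) / a := by
    rw [Int.fract_div_intCast_eq_div_intCast_mod]
  have hfb : Int.fract (((ainv * (n : ℤ) : ℤ) : ℝ) / (b : ℝ)) = (x0 : ℝ) / b := by
    rw [Int.fract_div_intCast_eq_div_intCast_mod]
  rw [hfa, hfb]
  have hKr : ((n:ℝ) - a * x0 - b * y0) = (a * b : ℝ) * K := by exact_mod_cast congrArg (Int.cast : ℤ → ℝ) hK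
  have hmr : (m : ℝ) = (K : ℝ) + 1 := by exact_mod_cast hmK
  rw [hmr]
  have ha0 : (a:ℝ) ≠ 0 := by positivity
  have hb0 : (b:ℝ) ≠ 0 := by positivity
  have h2 : (n:ℝ)/((a:ℝ)*b) - (y0:ℝ)/a - (x0:ℝ)/b = (K:ℝ) := by
    have h1 : (n:ℝ)/((a:ℝ)*b) - (y0:ℝ)/a - (x0:ℝ)/b = ((n:ℝ) - a*x0 - b*y0)/((a:ℝ)*b) := by
      field_simp
      ring
    rw [h1, hKr, mul_div_cancel_left₀ _ (mul_ne_zero ha0 hb0)]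
  linarith [h2]
end

section
/- For every integer t and every positive integer a, −{t/a} = (1−a)/(2a) + (1/a)·∑_{k=1}^{a−1} e^{2πitk/a}/(1 − e^{−2πik/a}), where {t/a} denotes the fractional part of t/a. -/
open Complex

lemma frac_one (w : ℂ) (h0 : w ≠ 0) (h1 : w ≠ 1) : 1/(1-w⁻¹) + 1/(1-w) = 1 := by
  have hd2 : (1:ℂ) - w ≠ 0 := sub_ne_zero.2 (Ne.symm h1)
  have hd4 : (-1:ℂ) + w ≠ 0 := by intro h; apply h1; linear_combination h
  have hd1 : 1 - w⁻¹ ≠ 0 := by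
    intro h; apply h1; rw [← inv_inv w, inv_eq_one]; linear_combination -h
  have key : (-1 + w) * (-1 + w)⁻¹ = 1 := mul_inv_cancel₀ hd4
  field_simp [hd2]
  ring

lemma frac_two (v w : ℂ) (h0 : w ≠ 0) (h1 : w ≠ 1) :
    v/(1-w⁻¹) - v*w/(1-w⁻¹) = -(v*w) := by
  have hd2 : (1:ℂ) - w ≠ 0 := sub_ne_zero.2 (Ne.symm h1)
  have hd4 : (-1:ℂ) + w ≠ 0 := by intro h; apply h1; linear_combination h
  have hd1 : 1 - w⁻¹ ≠ 0 := by
    intro h; apply h1; rw [← inv_inv w, inv_eq_one]; linear_combination -h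
  have key : (-1 + w) * (-1 + w)⁻¹ = 1 := mul_inv_cancel₀ hd4
  field_simp [hd2]
  ring

lemma key_sum (a : ℕ) (ha : 0 < a) {ζ : ℂ} (hζ : IsPrimitiveRoot ζ a) :
    ∀ r : ℕ, r < a →
    ∑ k ∈ Finset.Icc 1 (a - 1), ζ ^ (r * k) / (1 - (ζ ^ k)⁻¹)
      = ((a : ℂ) - 1) / 2 - r := by
  have h1a : 1 ≤ a := ha
  have hz : ζ ≠ 0 := hζ.ne_zero ha.ne'
  have hne1 : ∀ k ∈ Finset.Icc 1 (a - 1), ζ ^ k ≠ 1 := by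
    intro k hk
    rw [Finset.mem_Icc] at hk
    exact hζ.pow_ne_one_of_pos_of_lt (by omega) (by omega)
  have hrange : Finset.range a = insert 0 (Finset.Icc 1 (a - 1)) := by
    ext k
    simp only [Finset.mem_range, Finset.mem_insert, Finset.mem_Icc]
    omega
  intro r
  induction r with
  | zero =>
    intro _
    simp only [Nat.zero_mul, pow_zero]
    set f : ℕ → ℂ := fun k => 1 / (1 - (ζ ^ k)⁻¹) with hf
    have hswap : ∑ k ∈ Finset.Icc 1 (a - 1), f k
        = ∑ k ∈ Finset.Icc 1 (a - 1), f (a - k) := by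
      refine Finset.sum_nbij' (fun k => a - k) (fun k => a - k) ?_ ?_ ?_ ?_ ?_ <;>
        simp only [Finset.mem_Icc]
      · intro k hk; omega
      · intro k hk; omega
      · intro k hk; omega
      · intro k hk; omega
      · intro k hk
        have hk2 : a - (a - k) = k := by omega
        rw [hk2]
    have hpair : ∀ k ∈ Finset.Icc 1 (a - 1), f k + f (a - k) = 1 := by
      intro k hk
      rw [Finset.mem_Icc] at hk
      have hinv : ζ ^ (a - k) = (ζ ^ k)⁻¹ := by
        apply eq_inv_of_mul_eq_one_left
        rw [← pow_add]
        have h3 : a - k + k = a := by omega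
        rw [h3, hζ.pow_eq_one]
      have hw1 : ζ ^ k ≠ 1 := hne1 k (Finset.mem_Icc.2 hk)
      have hw0 : ζ ^ k ≠ 0 := pow_ne_zero _ hz
      simp only [hf, hinv, inv_inv]
      exact frac_one _ hw0 hw1
    have h2 : (∑ k ∈ Finset.Icc 1 (a - 1), f k) + (∑ k ∈ Finset.Icc 1 (a - 1), f k)
        = (a : ℂ) - 1 := by
      nth_rewrite 2 [hswap]
      rw [← Finset.sum_add_distrib, Finset.sum_congr rfl hpair, Finset.sum_const,
        Nat.card_Icc]
      have h4 : a - 1 + 1 - 1 = a - 1 := by omega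
      rw [h4]
      simp [nsmul_eq_mul, Nat.cast_sub h1a]
    simp only [hf, one_div] at h2 ⊢
    push_cast
    linear_combination h2 / 2
  | succ r ih =>
    intro hra
    have ihr := ih (by omega)
    have hw1 : ζ ^ (r + 1) ≠ 1 := hζ.pow_ne_one_of_pos_of_lt (by omega) hra
    have hgeom : ∑ k ∈ Finset.range a, (ζ ^ (r + 1)) ^ k = 0 := by
      rw [geom_sum_eq hw1]
      rw [← pow_mul, mul_comm, pow_mul, hζ.pow_eq_one, one_pow, sub_self, zero_div]
    have hIcc : ∑ k ∈ Finset.Icc 1 (a - 1), (ζ ^ (r + 1)) ^ k = -1 := by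
      rw [hrange, Finset.sum_insert (by simp)] at hgeom
      simp only [pow_zero] at hgeom
      linear_combination hgeom
    have hdiff : ∑ k ∈ Finset.Icc 1 (a - 1),
        (ζ ^ (r * k) / (1 - (ζ ^ k)⁻¹) - ζ ^ ((r + 1) * k) / (1 - (ζ ^ k)⁻¹))
        = ∑ k ∈ Finset.Icc 1 (a - 1), -((ζ ^ (r + 1)) ^ k) := by
      apply Finset.sum_congr rfl
      intro k hk
      have hw0 : ζ ^ k ≠ 0 := pow_ne_zero _ hz
      have hwk1 : ζ ^ k ≠ 1 := hne1 k hk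
      have h1 : (r + 1) * k = r * k + k := by ring
      rw [← pow_mul, h1, pow_add]
      exact frac_two _ _ hw0 hwk1
    rw [Finset.sum_sub_distrib, ihr, Finset.sum_neg_distrib, hIcc] at hdiff
    push_cast
    linear_combination -hdiff

/-- For every integer `t` and every positive integer `a`,
`-{t/a} = (1-a)/(2a) + (1/a)·∑_{k=1}^{a-1} e^{2πitk/a}/(1 - e^{-2πik/a})`,
where `{x}` denotes the fractional part. -/
theorem fractional_part_discrete_fourier (t : ℤ) (a : ℕ) (ha : 0 < a) :
    (-(Int.fract ((t : ℝ) / (a : ℝ))) : ℂ) =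
      (1 - (a : ℂ)) / (2 * (a : ℂ))
        + (1 / (a : ℂ)) * ∑ k ∈ Finset.Icc 1 (a - 1),
            Complex.exp (2 * (Real.pi : ℂ) * I * (t : ℂ) * (k : ℂ) / (a : ℂ))
              / (1 - Complex.exp (-(2 * (Real.pi : ℂ) * I * (k : ℂ) / (a : ℂ)))) := by
  set ζ : ℂ := Complex.exp (2 * (Real.pi : ℂ) * I / a) with hζdef
  have hprim : IsPrimitiveRoot ζ a := Complex.isPrimitiveRoot_exp a ha.ne'
  have hz : ζ ≠ 0 := hprim.ne_zero ha.ne'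
  have ha0 : (a : ℂ) ≠ 0 := Nat.cast_ne_zero.2 ha.ne'
  set r : ℕ := (t % a).toNat with hrdef
  have hmod : (r : ℤ) = t % a := Int.toNat_of_nonneg (Int.emod_nonneg t (by exact_mod_cast ha.ne'))
  have hr : r < a := by
    have := Int.emod_lt_of_pos t (b := a) (by exact_mod_cast ha)
    omega
  have hlhs : Int.fract ((t : ℝ) / (a : ℝ)) = (r : ℝ) / a := by
    rw [Int.fract_div_intCast_eq_div_intCast_mod, ← hmod]
    push_cast
    ring
  have hsummand : ∀ k ∈ Finset.Icc 1 (a - 1),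
      Complex.exp (2 * (Real.pi : ℂ) * I * (t : ℂ) * (k : ℂ) / (a : ℂ))
        / (1 - Complex.exp (-(2 * (Real.pi : ℂ) * I * (k : ℂ) / (a : ℂ))))
      = ζ ^ (r * k) / (1 - (ζ ^ k)⁻¹) := by
    intro k hk
    have hnum : Complex.exp (2 * (Real.pi : ℂ) * I * (t : ℂ) * (k : ℂ) / (a : ℂ))
        = ζ ^ (r * k) := by
      have harg : 2 * (Real.pi : ℂ) * I * (t : ℂ) * (k : ℂ) / (a : ℂ)
          = ((t * k : ℤ) : ℂ) * (2 * (Real.pi : ℂ) * I / a) := by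
        push_cast; ring
      rw [harg, Complex.exp_int_mul, ← hζdef]
      have ht : t * (k : ℤ) = (a : ℤ) * ((t / a) * k) + ((r * k : ℕ) : ℤ) := by
        have h5 := Int.mul_ediv_add_emod t (a : ℤ)
        push_cast [← hmod] at h5 ⊢
        linear_combination (-(k : ℤ)) * h5
      rw [ht, zpow_add₀ hz, zpow_mul, zpow_natCast, zpow_natCast, hprim.pow_eq_one,
        one_zpow, one_mul]
    have hden : Complex.exp (-(2 * (Real.pi : ℂ) * I * (k : ℂ) / (a : ℂ))) = (ζ ^ k)⁻¹ := by
      rw [Complex.exp_neg]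
      congr 1
      have harg : 2 * (Real.pi : ℂ) * I * (k : ℂ) / (a : ℂ)
          = (k : ℂ) * (2 * (Real.pi : ℂ) * I / a) := by ring
      rw [harg, Complex.exp_nat_mul, ← hζdef]
    rw [hnum, hden]
  rw [Finset.sum_congr rfl hsummand, key_sum a ha hprim r hr, hlhs]
  push_cast
  field_simp
  ring
end

section
/- For each n ≥ 1 and each x = (x₁,…,x_n) ∈ ℝⁿ with all x_i > 0, let Π_n(x) := {y ∈ ℝⁿ : y_i ≥ 0 and y₁+⋯+y_i ≤ x₁+⋯+x_i for all 1 ≤ i ≤ n}. Then the n-dimensional Lebesgue measure of Π_n(x) equals ∑_{k∈K_n} x^k/k! = (1/n!)·∑_{k∈K_n} (n choose k)·x^k. -/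
open MeasureTheory

/-- The index set `K_n` of exponent vectors: `k ∈ ℤ₊ⁿ` with `k₁+⋯+k_j ≥ j` for all
`1 ≤ j ≤ n-1` and `k₁+⋯+k_n = n`.  (Each such `k` satisfies `k_i ≤ n`, so `K_n` is
faithfully realized as a filtered finite set.) -/
def Kn (n : ℕ) : Finset (Fin n → ℕ) :=
  (Fintype.piFinset fun _ : Fin n => Finset.range (n + 1)).filter
    fun k => (∀ j : Fin n, (j : ℕ) + 1 < n → (j : ℕ) + 1 ≤ ∑ i ∈ Finset.Iic j, k i) ∧
      ∑ i, k i = n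

open Finset


lemma Iic_zero_fin (n : ℕ) : Finset.Iic (0 : Fin (n+1)) = {0} := by
  ext i; simp [Fin.le_zero_iff]

lemma Iic_succ_fin {n : ℕ} (j : Fin n) :
    Finset.Iic (j.succ) = insert 0 ((Finset.Iic j).map (Fin.succEmb n)) := by
  ext i
  simp only [mem_Iic, mem_insert, mem_map, Fin.coe_succEmb]
  constructor
  · intro h
    rcases Fin.eq_zero_or_eq_succ i with h0 | ⟨i', rfl⟩
    · exact Or.inl h0
    · exact Or.inr ⟨i', by simpa [Fin.succ_le_succ_iff] using h, rfl⟩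
  · rintro (rfl | ⟨i', hi', rfl⟩)
    · exact Fin.zero_le _
    · exact Fin.succ_le_succ_iff.mpr hi'

lemma sum_Iic_succ {M : Type*} [AddCommMonoid M] {n : ℕ} (y : Fin (n+1) → M) (j : Fin n) :
    ∑ i ∈ Finset.Iic j.succ, y i = y 0 + ∑ i ∈ Finset.Iic j, y i.succ := by
  rw [Iic_succ_fin, Finset.sum_insert (by simp [Fin.succ_ne_zero]), Finset.sum_map]
  rfl

lemma sum_Iic_zero {M : Type*} [AddCommMonoid M] {n : ℕ} (y : Fin (n+1) → M) :
    ∑ i ∈ Finset.Iic (0 : Fin (n+1)), y i = y 0 := by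
  rw [Iic_zero_fin]; simp

lemma mem_Kn_iff {n : ℕ} {k : Fin n → ℕ} :
    k ∈ Kn n ↔ (∀ j : Fin n, (j : ℕ) + 1 < n → (j : ℕ) + 1 ≤ ∑ i ∈ Finset.Iic j, k i) ∧
      ∑ i, k i = n := by
  constructor
  · intro h; exact (Finset.mem_filter.mp h).2
  · intro h
    refine Finset.mem_filter.mpr ⟨?_, h⟩
    refine Fintype.mem_piFinset.mpr fun i => Finset.mem_range.mpr ?_
    have : k i ≤ n := h.2 ▸ Finset.single_le_sum (fun _ _ => Nat.zero_le _) (Finset.mem_univ i)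
    omega

lemma Kn_partial {n : ℕ} {k : Fin n → ℕ} (hk : k ∈ Kn n) (j : Fin n) :
    (j : ℕ) + 1 ≤ ∑ i ∈ Finset.Iic j, k i := by
  obtain ⟨h1, h2⟩ := mem_Kn_iff.mp hk
  rcases lt_or_eq_of_le (Nat.succ_le_of_lt j.isLt) with h | h
  · exact h1 j h
  · have : Finset.Iic j = Finset.univ := by
      ext i; simp only [mem_Iic, Finset.mem_univ, iff_true]
      have := i.isLt
      exact Fin.le_def.mpr (by omega)
    rw [this, h2]; omega

def glue (m : ℕ) (k' : Fin (m+1) → ℕ) (c : ℕ) : Fin (m+2) → ℕ :=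
  Fin.cons (c+1) (Fin.cons (k' 0 - c) (fun j => k' j.succ))

def shrink (m : ℕ) (k : Fin (m+2) → ℕ) : Fin (m+1) → ℕ :=
  Fin.cons (k 0 + k 1 - 1) (fun j => k j.succ.succ)

lemma sum_Iic_one {M : Type*} [AddCommMonoid M] {n : ℕ} (y : Fin (n+2) → M) :
    ∑ i ∈ Finset.Iic (1 : Fin (n+2)), y i = y 0 + y 1 := by
  have h1 : (1 : Fin (n+2)) = (0 : Fin (n+1)).succ := rfl
  rw [h1, sum_Iic_succ, sum_Iic_zero]

lemma glue_sum_Iic {m : ℕ} (k' : Fin (m+1) → ℕ) {c : ℕ} (hc : c ≤ k' 0) (j : Fin (m+1)) :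
    ∑ i ∈ Finset.Iic j.succ, glue m k' c i = ∑ i ∈ Finset.Iic j, k' i + 1 := by
  induction j using Fin.cases with
  | zero =>
    rw [sum_Iic_succ, sum_Iic_zero, sum_Iic_zero]
    simp only [glue, Fin.cons_zero, Fin.cons_succ]
    omega
  | succ j' =>
    rw [sum_Iic_succ, sum_Iic_succ, sum_Iic_succ]
    simp only [glue, Fin.cons_zero, Fin.cons_succ]
    omega

lemma glue_sum {m : ℕ} (k' : Fin (m+1) → ℕ) {c : ℕ} (hc : c ≤ k' 0) :
    ∑ i, glue m k' c i = ∑ i, k' i + 1 := by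
  rw [Fin.sum_univ_succ, Fin.sum_univ_succ (f := fun i => glue m k' c i.succ),
    Fin.sum_univ_succ (f := k')]
  simp only [glue, Fin.cons_zero, Fin.cons_succ]
  omega

lemma glue_mem {m : ℕ} {k' : Fin (m+1) → ℕ} (hk' : k' ∈ Kn (m+1)) {c : ℕ} (hc : c ≤ k' 0) :
    glue m k' c ∈ Kn (m+2) := by
  refine mem_Kn_iff.mpr ⟨?_, ?_⟩
  · intro j _
    induction j using Fin.cases with
    | zero =>
      rw [sum_Iic_zero]
      simp [glue]
    | succ j' =>
      rw [glue_sum_Iic k' hc]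
      have := Kn_partial hk' j'
      simpa using by omega
  · rw [glue_sum k' hc, (mem_Kn_iff.mp hk').2]

lemma shrink_k0 {m : ℕ} {k : Fin (m+2) → ℕ} (hk : k ∈ Kn (m+2)) :
    1 ≤ k 0 ∧ 2 ≤ k 0 + k 1 := by
  have h0 := Kn_partial hk 0
  have h1 := Kn_partial hk 1
  rw [sum_Iic_zero] at h0
  rw [sum_Iic_one] at h1
  simp at h0 h1 ⊢
  omega

lemma shrink_sum_Iic {m : ℕ} {k : Fin (m+2) → ℕ} (hk : k ∈ Kn (m+2)) (j : Fin (m+1)) :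
    ∑ i ∈ Finset.Iic j, shrink m k i + 1 = ∑ i ∈ Finset.Iic j.succ, k i := by
  have h2 := (shrink_k0 hk).2
  induction j using Fin.cases with
  | zero =>
    rw [sum_Iic_zero, Fin.succ_zero_eq_one, sum_Iic_one]
    simp only [shrink, Fin.cons_zero]
    omega
  | succ j' =>
    rw [sum_Iic_succ, sum_Iic_succ, sum_Iic_succ (fun i => k i.succ)]
    simp only [shrink, Fin.cons_zero, Fin.cons_succ, Fin.succ_zero_eq_one]
    omega

lemma shrink_sum {m : ℕ} {k : Fin (m+2) → ℕ} (hk : k ∈ Kn (m+2)) :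
    ∑ i, shrink m k i + 1 = ∑ i, k i := by
  have h2 := (shrink_k0 hk).2
  rw [Fin.sum_univ_succ (f := fun i => shrink m k i), Fin.sum_univ_succ (f := k),
    Fin.sum_univ_succ (f := fun i => k i.succ)]
  simp only [shrink, Fin.cons_zero, Fin.cons_succ, Fin.succ_zero_eq_one]
  omega

lemma shrink_mem {m : ℕ} {k : Fin (m+2) → ℕ} (hk : k ∈ Kn (m+2)) :
    shrink m k ∈ Kn (m+1) := by
  refine mem_Kn_iff.mpr ⟨?_, ?_⟩
  · intro j _
    have h := shrink_sum_Iic hk j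
    have h2 := Kn_partial hk j.succ
    rw [← h] at h2
    simp only [Fin.val_succ] at h2
    omega
  · have := shrink_sum hk
    rw [(mem_Kn_iff.mp hk).2] at this
    omega

lemma glue_shrink {m : ℕ} {k : Fin (m+2) → ℕ} (hk : k ∈ Kn (m+2)) :
    glue m (shrink m k) (k 0 - 1) = k := by
  obtain ⟨h1, h2⟩ := shrink_k0 hk
  funext i
  induction i using Fin.cases with
  | zero => simp only [glue, Fin.cons_zero]; omega
  | succ i' =>
    induction i' using Fin.cases with
    | zero =>
      simp only [glue, shrink, Fin.cons_succ, Fin.cons_zero]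
      rw [Fin.succ_zero_eq_one]
      omega
    | succ i'' => simp only [glue, shrink, Fin.cons_succ]

lemma shrink_glue {m : ℕ} (k' : Fin (m+1) → ℕ) {c : ℕ} (hc : c ≤ k' 0) :
    shrink m (glue m k' c) = k' ∧ glue m k' c 0 - 1 = c := by
  constructor
  · funext i
    induction i using Fin.cases with
    | zero =>
      have e0 : shrink m (glue m k' c) 0 = glue m k' c 0 + glue m k' c 1 - 1 := rfl
      have e1 : glue m k' c 0 = c + 1 := rfl
      have e2 : glue m k' c 1 = k' 0 - c := rfl
      rw [e0, e1, e2]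
      omega
    | succ i' => simp only [shrink, glue, Fin.cons_succ]
  · simp [glue]

lemma Kn_decomp {m : ℕ} (f : (Fin (m+2) → ℕ) → ℝ) :
    ∑ k ∈ Kn (m+2), f k
      = ∑ k' ∈ Kn (m+1), ∑ c ∈ Finset.range (k' 0 + 1), f (glue m k' c) := by
  rw [← Finset.sum_sigma (Kn (m+1)) (fun k' => Finset.range (k' 0 + 1))
    (fun p => f (glue m p.1 p.2))]
  refine Finset.sum_nbij'
    (fun k => (⟨shrink m k, k 0 - 1⟩ : Σ _ : Fin (m+1) → ℕ, ℕ))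
    (fun p => glue m p.1 p.2) ?_ ?_ ?_ ?_ ?_
  · intro k hk
    refine Finset.mem_sigma.mpr ⟨shrink_mem hk, Finset.mem_range.mpr ?_⟩
    obtain ⟨h1, h2⟩ := shrink_k0 hk
    simp only [shrink, Fin.cons_zero]
    omega
  · rintro ⟨k', c⟩ hp
    obtain ⟨hk', hc⟩ := Finset.mem_sigma.mp hp
    exact glue_mem hk' (by simpa [Nat.lt_succ_iff] using Finset.mem_range.mp hc)
  · intro k hk
    exact glue_shrink hk
  · rintro ⟨k', c⟩ hp
    obtain ⟨hk', hc⟩ := Finset.mem_sigma.mp hp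
    have hc' : c ≤ k' 0 := by simpa [Nat.lt_succ_iff] using Finset.mem_range.mp hc
    obtain ⟨e1, e2⟩ := shrink_glue k' hc'
    exact Sigma.ext e1 (heq_of_eq (by simpa using e2))
  · intro k hk
    simp only
    rw [glue_shrink hk]

lemma binom_id (a : ℕ) (u v : ℝ) :
    ((u + v) ^ (a + 1) - v ^ (a + 1)) / ((a + 1).factorial : ℝ)
      = ∑ c ∈ Finset.range (a + 1),
          u ^ (c + 1) * v ^ (a - c) / (((c + 1).factorial : ℝ) * ((a - c).factorial : ℝ)) := by
  rw [add_pow, Finset.sum_range_succ']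
  simp only [pow_zero, Nat.choose_zero_right, Nat.cast_one, mul_one, one_mul,
    Nat.add_sub_cancel, Nat.sub_zero]
  rw [add_sub_cancel_right, Finset.sum_div]
  refine Finset.sum_congr rfl fun c hc => ?_
  have hca : c + 1 ≤ a + 1 := Nat.succ_le_succ (Nat.lt_succ_iff.mp (Finset.mem_range.mp hc))
  have key := Nat.choose_mul_factorial_mul_factorial hca
  have h1 : a + 1 - (c + 1) = a - c := by omega
  rw [h1] at key
  have h2 : ((a + 1).choose (c + 1) : ℝ) * ((c + 1).factorial : ℝ) * ((a - c).factorial : ℝ)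
      = ((a + 1).factorial : ℝ) := by exact_mod_cast congrArg (Nat.cast (R := ℝ)) key
  rw [h1, div_eq_div_iff (by positivity) (by positivity)]
  linear_combination (u ^ (c + 1) * v ^ (a - c)) * h2

noncomputable def Fps (n : ℕ) (x : Fin n → ℝ) : ℝ :=
  ∑ k ∈ Kn n, (∏ i, x i ^ k i) / ∏ i, ((k i).factorial : ℝ)

lemma Fps_nonneg {n : ℕ} {x : Fin n → ℝ} (hx : ∀ i, 0 ≤ x i) : 0 ≤ Fps n x := by
  refine Finset.sum_nonneg fun k _ => div_nonneg ?_ ?_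
  · exact Finset.prod_nonneg fun i _ => pow_nonneg (hx i) _
  · exact Finset.prod_nonneg fun i _ => by positivity

lemma Kn_one : Kn 1 = {fun _ => 1} := by
  ext k
  rw [mem_Kn_iff, Finset.mem_singleton]
  constructor
  · rintro ⟨-, h2⟩
    funext i
    have h0 : i = 0 := Subsingleton.elim _ _
    rw [h0]
    simpa using h2
  · rintro rfl
    exact ⟨fun j hj => absurd hj (by omega), by simp⟩

lemma Fps_one (x : Fin 1 → ℝ) : Fps 1 x = x 0 := by
  rw [Fps, Kn_one]
  simp

lemma Fps_cont {m : ℕ} (x : Fin (m + 2) → ℝ) :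
    Continuous fun t : ℝ =>
      Fps (m + 1) (Fin.cons (x 0 + x 1 - t) (fun j => x j.succ.succ)) := by
  refine continuous_finset_sum _ fun k _ => Continuous.div_const ?_ _
  refine continuous_finset_prod _ fun i _ => Continuous.pow ?_ _
  induction i using Fin.cases with
  | zero =>
    simp only [Fin.cons_zero]
    exact continuous_const.sub continuous_id
  | succ i' =>
    simp only [Fin.cons_succ]
    exact continuous_const

lemma term_cont {m : ℕ} (x : Fin (m + 2) → ℝ) (k : Fin (m + 1) → ℕ) :
    Continuous fun t : ℝ =>
      (∏ i, (Fin.cons (x 0 + x 1 - t) (fun j => x j.succ.succ) : Fin (m+1) → ℝ) i ^ k i)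
        / ∏ i, ((k i).factorial : ℝ) := by
  refine Continuous.div_const ?_ _
  refine continuous_finset_prod _ fun i _ => Continuous.pow ?_ _
  induction i using Fin.cases with
  | zero =>
    simp only [Fin.cons_zero]
    exact continuous_const.sub continuous_id
  | succ i' =>
    simp only [Fin.cons_succ]
    exact continuous_const

lemma Fps_rec (m : ℕ) (x : Fin (m + 2) → ℝ) :
    (∫ t in (0:ℝ)..(x 0), Fps (m + 1) (Fin.cons (x 0 + x 1 - t) fun j => x j.succ.succ))
      = Fps (m + 2) x := by
  simp only [Fps]
  rw [intervalIntegral.integral_finset_sum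
    (fun k _ => ((term_cont x k).intervalIntegrable _ _))]
  rw [Kn_decomp (fun k => (∏ i, x i ^ k i) / ∏ i, ((k i).factorial : ℝ))]
  refine Finset.sum_congr rfl fun k' hk' => ?_
  have hQpos : (0:ℝ) < ∏ j : Fin m, ((k' j.succ).factorial : ℝ) := by positivity
  have hint : (∫ t in (0:ℝ)..(x 0), (x 0 + x 1 - t) ^ (k' 0))
      = ((x 0 + x 1) ^ (k' 0 + 1) - (x 1) ^ (k' 0 + 1)) / ((k' 0 : ℝ) + 1) := by
    rw [intervalIntegral.integral_comp_sub_left (fun s => s ^ (k' 0)) (x 0 + x 1)]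
    rw [integral_pow]
    rw [sub_zero, add_sub_cancel_left]
  calc (∫ t in (0:ℝ)..(x 0),
        (∏ i, (Fin.cons (x 0 + x 1 - t) (fun j => x j.succ.succ) : Fin (m+1) → ℝ) i ^ k' i)
          / ∏ i, ((k' i).factorial : ℝ))
      = ∫ t in (0:ℝ)..(x 0), (x 0 + x 1 - t) ^ (k' 0) *
          ((∏ j : Fin m, x j.succ.succ ^ k' j.succ) /
            (((k' 0).factorial : ℝ) * ∏ j : Fin m, ((k' j.succ).factorial : ℝ))) := by
        congr 1
        funext t
        rw [Fin.prod_univ_succ, Fin.prod_univ_succ (f := fun i => ((k' i).factorial : ℝ))]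
        simp only [Fin.cons_zero, Fin.cons_succ]
        ring
    _ = (((x 0 + x 1) ^ (k' 0 + 1) - (x 1) ^ (k' 0 + 1)) / ((k' 0 : ℝ) + 1)) *
          ((∏ j : Fin m, x j.succ.succ ^ k' j.succ) /
            (((k' 0).factorial : ℝ) * ∏ j : Fin m, ((k' j.succ).factorial : ℝ))) := by
        rw [intervalIntegral.integral_mul_const, hint]
    _ = (((x 0 + x 1) ^ (k' 0 + 1) - (x 1) ^ (k' 0 + 1)) / ((k' 0 + 1).factorial : ℝ)) *
          ((∏ j : Fin m, x j.succ.succ ^ k' j.succ) /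
            (∏ j : Fin m, ((k' j.succ).factorial : ℝ))) := by
        rw [div_mul_div_comm, div_mul_div_comm, Nat.factorial_succ]
        push_cast
        ring_nf
    _ = ∑ c ∈ Finset.range (k' 0 + 1),
          (∏ i, x i ^ glue m k' c i) / ∏ i, ((glue m k' c i).factorial : ℝ) := by
        rw [binom_id, Finset.sum_mul]
        refine Finset.sum_congr rfl fun c hc => ?_
        have hgp : ∀ i : Fin (m+2), x i ^ glue m k' c i
            = x i ^ glue m k' c i := fun _ => rfl
        rw [Fin.prod_univ_succ (f := fun i => x i ^ glue m k' c i),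
          Fin.prod_univ_succ (f := fun i => x i.succ ^ glue m k' c i.succ),
          Fin.prod_univ_succ (f := fun i => ((glue m k' c i).factorial : ℝ)),
          Fin.prod_univ_succ (f := fun i => ((glue m k' c i.succ).factorial : ℝ))]
        simp only [glue, Fin.cons_zero, Fin.cons_succ]
        simp only [Fin.succ_zero_eq_one]
        rw [div_mul_div_comm]
        ring

def PS (n : ℕ) (x : Fin n → ℝ) : Set (Fin n → ℝ) :=
  {y | (∀ i, 0 ≤ y i) ∧ ∀ i : Fin n, ∑ j ∈ Finset.Iic i, y j ≤ ∑ j ∈ Finset.Iic i, x j}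

lemma PS_meas (n : ℕ) (x : Fin n → ℝ) : MeasurableSet (PS n x) := by
  have h : PS n x = (⋂ i, {y : Fin n → ℝ | 0 ≤ y i}) ∩
      ⋂ i, {y : Fin n → ℝ | ∑ j ∈ Finset.Iic i, y j ≤ ∑ j ∈ Finset.Iic i, x j} := by
    ext y
    simp only [PS, Set.mem_setOf_eq, Set.mem_inter_iff, Set.mem_iInter]
  rw [h]
  refine (MeasurableSet.iInter fun i => ?_).inter (MeasurableSet.iInter fun i => ?_)
  · exact measurableSet_le measurable_const (measurable_pi_apply i)
  · exact measurableSet_le (Finset.measurable_sum _ fun j _ => measurable_pi_apply j)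
      measurable_const

lemma xt_sum {m : ℕ} (x : Fin (m + 2) → ℝ) (t : ℝ) (j : Fin (m + 1)) :
    ∑ i ∈ Finset.Iic j, (Fin.cons (x 0 + x 1 - t) (fun j' => x j'.succ.succ) : Fin (m+1) → ℝ) i
      = ∑ i ∈ Finset.Iic j.succ, x i - t := by
  induction j using Fin.cases with
  | zero =>
    rw [sum_Iic_zero, Fin.succ_zero_eq_one, sum_Iic_one, Fin.cons_zero]
  | succ j' =>
    rw [sum_Iic_succ, sum_Iic_succ (y := x), sum_Iic_succ (y := fun i => x i.succ)]
    simp only [Fin.cons_zero, Fin.cons_succ, Fin.succ_zero_eq_one]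
    ring

lemma slice_eq {m : ℕ} (x : Fin (m + 2) → ℝ) (t : ℝ) :
    {z : Fin (m+1) → ℝ | Fin.cons t z ∈ PS (m+2) x}
      = if t ∈ Set.Icc 0 (x 0) then
          PS (m+1) (Fin.cons (x 0 + x 1 - t) (fun j => x j.succ.succ)) else ∅ := by
  split_ifs with ht
  · obtain ⟨ht0, ht1⟩ := Set.mem_Icc.mp ht
    ext z
    simp only [PS, Set.mem_setOf_eq]
    constructor
    · rintro ⟨h1, h2⟩
      refine ⟨fun i => by simpa using h1 i.succ, fun i => ?_⟩
      have h3 := h2 i.succ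
      rw [sum_Iic_succ] at h3
      simp only [Fin.cons_zero, Fin.cons_succ] at h3
      rw [xt_sum]
      linarith
    · rintro ⟨h1, h2⟩
      constructor
      · intro i
        induction i using Fin.cases with
        | zero => simpa using ht0
        | succ i' => simpa using h1 i'
      · intro i
        induction i using Fin.cases with
        | zero =>
          rw [sum_Iic_zero, sum_Iic_zero, Fin.cons_zero]
          linarith
        | succ i' =>
          have h3 := h2 i'
          rw [xt_sum] at h3
          rw [sum_Iic_succ, sum_Iic_succ (y := x)]
          simp only [Fin.cons_zero, Fin.cons_succ]
          rw [sum_Iic_succ (y := x)] at h3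
          linarith
  · ext z
    simp only [PS, Set.mem_setOf_eq, Set.mem_empty_iff_false, iff_false]
    rintro ⟨h1, h2⟩
    rw [Set.mem_Icc] at ht
    push_neg at ht
    rcases lt_or_ge t 0 with h | h
    · have := h1 0
      rw [Fin.cons_zero] at this
      linarith
    · have h4 := h2 0
      rw [sum_Iic_zero, sum_Iic_zero, Fin.cons_zero] at h4
      have := ht h
      linarith

lemma vol_PS : ∀ n, 1 ≤ n → ∀ x : Fin n → ℝ, (∀ i, 0 < x i) →
    volume (PS n x) = ENNReal.ofReal (Fps n x) := by
  refine Nat.le_induction ?_ ?_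
  · intro x hx
    have h : PS 1 x = Set.pi Set.univ (fun _ : Fin 1 => Set.Icc 0 (x 0)) := by
      ext y
      simp only [PS, Set.mem_setOf_eq, Set.mem_pi, Set.mem_univ, forall_true_left, Set.mem_Icc]
      constructor
      · rintro ⟨h1, h2⟩ i
        have hi : i = 0 := Fin.fin_one_eq_zero i
        subst hi
        refine ⟨h1 0, ?_⟩
        have h3 := h2 0
        rwa [sum_Iic_zero, sum_Iic_zero] at h3
      · intro h
        refine ⟨fun i => ?_, fun i => ?_⟩
        · have hi : i = 0 := Fin.fin_one_eq_zero i
          rw [hi]; exact (h 0).1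
        · have hi : i = 0 := Fin.fin_one_eq_zero i
          subst hi
          rw [sum_Iic_zero, sum_Iic_zero]
          exact (h 0).2
    rw [h, volume_pi_pi, Fps_one]
    simp [Real.volume_Icc]
  · intro n hn IH x hx
    obtain ⟨m, rfl⟩ : ∃ m, n = m + 1 := ⟨n - 1, by omega⟩
    set xt : ℝ → Fin (m+1) → ℝ :=
      fun t => Fin.cons (x 0 + x 1 - t) (fun j => x j.succ.succ) with hxt
    have hS : MeasurableSet (PS (m+2) x) := PS_meas _ _
    have hmp := (volume_preserving_piFinSuccAbove (fun _ : Fin (m+2) => ℝ) 0).symm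
    have h1 : volume (PS (m+2) x)
        = volume ((MeasurableEquiv.piFinSuccAbove (fun _ : Fin (m+2) => ℝ) 0).symm ⁻¹'
            PS (m+2) x) := (hmp.measure_preimage hS.nullMeasurableSet).symm
    have hpre : (MeasurableEquiv.piFinSuccAbove (fun _ : Fin (m+2) => ℝ) 0).symm ⁻¹'
        PS (m+2) x = {p : ℝ × (Fin (m+1) → ℝ) | Fin.cons p.1 p.2 ∈ PS (m+2) x} := by
      ext p
      simp only [Set.mem_preimage, Set.mem_setOf_eq,
        MeasurableEquiv.piFinSuccAbove_symm_apply]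
      rw [show (Fin.insertNthEquiv (fun _ : Fin (m+2) => ℝ) 0) p = Fin.insertNth 0 p.1 p.2
        from rfl, Fin.insertNth_zero']
    have hTm : MeasurableSet {p : ℝ × (Fin (m+1) → ℝ) | Fin.cons p.1 p.2 ∈ PS (m+2) x} := by
      rw [← hpre]
      exact (MeasurableEquiv.piFinSuccAbove (fun _ : Fin (m+2) => ℝ) 0).symm.measurable hS
    rw [h1, hpre, Measure.volume_eq_prod, Measure.prod_apply hTm]
    have h2 : ∀ t : ℝ, volume (Prod.mk t ⁻¹' {p : ℝ × (Fin (m+1) → ℝ) |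
        Fin.cons p.1 p.2 ∈ PS (m+2) x})
        = (Set.Icc 0 (x 0)).indicator (fun t => ENNReal.ofReal (Fps (m+1) (xt t))) t := by
      intro t
      have : Prod.mk t ⁻¹' {p : ℝ × (Fin (m+1) → ℝ) | Fin.cons p.1 p.2 ∈ PS (m+2) x}
          = {z : Fin (m+1) → ℝ | Fin.cons t z ∈ PS (m+2) x} := rfl
      rw [this, slice_eq]
      split_ifs with ht
      · rw [Set.indicator_of_mem ht]
        refine IH (xt t) fun i => ?_
        induction i using Fin.cases with
        | zero =>
          simp only [hxt, Fin.cons_zero]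
          have := hx 1
          have := (Set.mem_Icc.mp ht).2
          linarith
        | succ i' => simpa [hxt] using hx i'.succ.succ
      · rw [Set.indicator_of_notMem ht, measure_empty]
    rw [lintegral_congr h2, lintegral_indicator measurableSet_Icc]
    have hcont : Continuous fun t => Fps (m+1) (xt t) := Fps_cont x
    have hint : MeasureTheory.Integrable (fun t => Fps (m+1) (xt t))
        (volume.restrict (Set.Icc 0 (x 0))) := hcont.integrableOn_Icc
    have hnn : 0 ≤ᵐ[volume.restrict (Set.Icc 0 (x 0))] fun t => Fps (m+1) (xt t) := by
      refine (ae_restrict_iff' measurableSet_Icc).mpr (ae_of_all _ fun t ht => ?_)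
      refine Fps_nonneg fun i => ?_
      induction i using Fin.cases with
      | zero =>
        simp only [hxt, Fin.cons_zero]
        have := hx 1
        have := (Set.mem_Icc.mp ht).2
        linarith
      | succ i' => simpa [hxt] using (hx i'.succ.succ).le
    rw [← ofReal_integral_eq_lintegral_ofReal hint hnn]
    congr 1
    rw [MeasureTheory.integral_Icc_eq_integral_Ioc,
      ← intervalIntegral.integral_of_le (le_of_lt (hx 0))]
    exact Fps_rec m x


/-- The volume of the Pitman–Stanley polytope
`Π_n(x) = {y : y_i ≥ 0, y₁+⋯+y_i ≤ x₁+⋯+x_i for all i}` equals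
`∑_{k ∈ K_n} x^k / k! = (1/n!) ∑_{k ∈ K_n} (n choose k) x^k`. -/
theorem pitman_stanley_volume (n : ℕ) (hn : 1 ≤ n) (x : Fin n → ℝ) (hx : ∀ i, 0 < x i) :
    volume {y : Fin n → ℝ | (∀ i, 0 ≤ y i) ∧
        ∀ i : Fin n, ∑ j ∈ Finset.Iic i, y j ≤ ∑ j ∈ Finset.Iic i, x j} =
      ENNReal.ofReal (∑ k ∈ Kn n, (∏ i, x i ^ k i) / ∏ i, ((k i).factorial : ℝ)) ∧
    (∑ k ∈ Kn n, (∏ i, x i ^ k i) / ∏ i, ((k i).factorial : ℝ)) =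
      (1 / (n.factorial : ℝ)) *
        ∑ k ∈ Kn n, (Nat.multinomial Finset.univ k : ℝ) * ∏ i, x i ^ k i := by
  constructor
  · exact vol_PS n hn x hx
  · rw [Finset.mul_sum]
    refine Finset.sum_congr rfl fun k hk => ?_
    have hsum := (mem_Kn_iff.mp hk).2
    have spec := Nat.multinomial_spec Finset.univ k
    rw [hsum] at spec
    have hcast : ((∏ i, (k i).factorial : ℕ) : ℝ) * (Nat.multinomial Finset.univ k : ℝ)
        = (n.factorial : ℝ) := by exact_mod_cast congrArg (Nat.cast (R := ℝ)) spec
    push_cast at hcast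
    have hne : (∏ i, ((k i).factorial : ℝ)) ≠ 0 := by positivity
    have hnf : (n.factorial : ℝ) ≠ 0 := by positivity
    field_simp
    linear_combination (-(∏ i, x i ^ k i)) * hcast
end

section
/- Let n ≥ 1 and x₁,…,x_n ∈ ℝ. For a permutation i = ⟨i₁,…,i_n⟩ of {1,…,n} and each 1 ≤ k ≤ n, let J_k := {i_j : j ≤ k−1 and i_j ≤ i_k}, let j_k := max J_k (with j_k := 0 if J_k is empty), let x(i_k) := x_{j_k+1} + x_{j_k+2} + ⋯ + x_{i_k}, and let x(i) := ∏_{k=1}^n x(i_k). Then ∑_{i∈σ_n} x(i) = ∑_{k∈K_n} (n choose k)·x^k, where σ_n is the set of all permutations of {1,…,n}. -/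
/-- For a permutation `σ` of `{1,…,n}` (0-indexed as `Fin n`, so position `k` has
1-indexed value `(σ k) + 1`) and `k : Fin n`, `jIdx σ k` is `j_k = max J_k` where
`J_k = {i_j : j ≤ k-1, i_j ≤ i_k}` (with `j_k = 0` when `J_k = ∅`). -/
def jIdx (n : ℕ) (σ : Equiv.Perm (Fin n)) (k : Fin n) : ℕ :=
  (Finset.univ.filter fun j : Fin n => j < k ∧ σ j ≤ σ k).sup fun j => (σ j : ℕ) + 1

/-- `x(i_k) = x_{j_k+1} + x_{j_k+2} + ⋯ + x_{i_k}`, in 0-indexed form the sum of `x h`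
over those `h` with `j_k ≤ h ≤ (σ k)` (0-indexed `h` corresponds to 1-indexed `h+1`). -/
def xFactor (n : ℕ) (σ : Equiv.Perm (Fin n)) (x : Fin n → ℝ) (k : Fin n) : ℝ :=
  ∑ h ∈ Finset.univ.filter fun h : Fin n => jIdx n σ k ≤ (h : ℕ) ∧ (h : ℕ) ≤ (σ k : ℕ), x h

open Finset



lemma prod_monomial' {σ R ι : Type*} [CommSemiring R] (s : Finset ι)
    (d : ι → (σ →₀ ℕ)) : (∏ t ∈ s, MvPolynomial.monomial (d t) (1:R)) =
      MvPolynomial.monomial (∑ t ∈ s, d t) 1 := by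
  induction s using Finset.cons_induction with
  | empty => simp
  | cons a s ha ih => rw [prod_cons, ih, sum_cons, MvPolynomial.monomial_mul, mul_one]

lemma card_fiber_eq_multinomial {n : ℕ} (k : Fin n → ℕ) (hk : ∑ i, k i = n) :
    (univ.filter fun g : Fin n → Fin n =>
        ∀ i, (univ.filter fun t => g t = i).card = k i).card
      = Nat.multinomial univ k := by
  classical
  set d : (Fin n → Fin n) → (Fin n →₀ ℕ) := fun g => ∑ t, Finsupp.single (g t) 1 with hd
  set D : Fin n →₀ ℕ := ∑ i, Finsupp.single i (k i) with hD
  have hDapp : ∀ i, D i = k i := by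
    intro i
    rw [hD, Finsupp.finset_sum_apply]
    rw [Finset.sum_eq_single i (fun b _ hb => by simp [Finsupp.single_apply, hb]) (by simp)]
    simp
  have hdapp : ∀ g i, d g i = (univ.filter fun t => g t = i).card := by
    intro g i
    rw [hd, Finsupp.finset_sum_apply]
    simp only [Finsupp.single_apply]
    exact (Finset.card_filter _ _).symm
  have key : ((∑ i, (MvPolynomial.X i : MvPolynomial (Fin n) ℕ)) ^ n) =
      ∑ g : Fin n → Fin n, MvPolynomial.monomial (d g) 1 := by
    have : ((∑ i, (MvPolynomial.X i : MvPolynomial (Fin n) ℕ)) ^ n) =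
        ∏ _t : Fin n, (∑ i, (MvPolynomial.X i : MvPolynomial (Fin n) ℕ)) := by
      rw [Finset.prod_const, Finset.card_univ, Fintype.card_fin]
    rw [this, Finset.prod_univ_sum]
    rw [Fintype.piFinset_univ]
    refine Finset.sum_congr rfl fun g _ => ?_
    simp_rw [MvPolynomial.X]
    exact prod_monomial' _ _
  have key2 : ((∑ i, (MvPolynomial.X i : MvPolynomial (Fin n) ℕ)) ^ n) =
      ∑ k' ∈ piAntidiag (univ : Finset (Fin n)) n,
        (Nat.multinomial univ k' : MvPolynomial (Fin n) ℕ) *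
          MvPolynomial.monomial (∑ i, Finsupp.single i (k' i)) 1 := by
    rw [Finset.sum_pow_eq_sum_piAntidiag]
    refine Finset.sum_congr rfl fun k' _ => ?_
    congr 1
    simp_rw [MvPolynomial.X_pow_eq_monomial]
    exact prod_monomial' _ _
  have hcoeff1 : MvPolynomial.coeff D ((∑ i, (MvPolynomial.X i : MvPolynomial (Fin n) ℕ)) ^ n)
      = (univ.filter fun g : Fin n → Fin n => d g = D).card := by
    rw [key, MvPolynomial.coeff_sum]
    simp_rw [MvPolynomial.coeff_monomial]
    exact (Finset.card_filter _ _).symm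
  have hcoeff2 : MvPolynomial.coeff D ((∑ i, (MvPolynomial.X i : MvPolynomial (Fin n) ℕ)) ^ n)
      = Nat.multinomial univ k := by
    rw [key2, MvPolynomial.coeff_sum]
    have hmem : k ∈ piAntidiag (univ : Finset (Fin n)) n := by
      rw [Finset.mem_piAntidiag]; exact ⟨hk, fun i _ => mem_univ i⟩
    simp_rw [show ∀ m : ℕ, ((m : ℕ) : MvPolynomial (Fin n) ℕ) = MvPolynomial.C m
      from fun m => (MvPolynomial.C_eq_coe_nat m).symm, MvPolynomial.C_mul_monomial, mul_one]
    simp_rw [MvPolynomial.coeff_monomial]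
    rw [Finset.sum_eq_single k]
    · simp [hD]
    · intro k' hk' hne
      have : ¬ (∑ i, Finsupp.single i (k' i)) = D := by
        intro h
        apply hne; funext i
        have := DFunLike.congr_fun h i
        rw [hDapp i] at this
        rw [← this, Finsupp.finset_sum_apply]
        rw [Finset.sum_eq_single i (fun b _ hb => by simp [Finsupp.single_apply, hb]) (by simp)]
        simp
      simp [this]
    · intro h; exact absurd hmem h
  have : (univ.filter fun g : Fin n → Fin n => d g = D) =
      (univ.filter fun g : Fin n → Fin n => ∀ i, (univ.filter fun t => g t = i).card = k i) := by
    ext g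
    simp only [mem_filter, mem_univ, true_and]
    rw [DFunLike.ext_iff]
    constructor
    · intro h i; rw [← hdapp g i, h i, hDapp]
    · intro h i; rw [hdapp g i, h i, hDapp]
  rw [hcoeff1, this] at hcoeff2
  exact hcoeff2


variable {n : ℕ}


/-- positions used by values `< v` in the greedy assignment -/
def usedP (g : Fin n → Fin n) : ℕ → Finset (Fin n)
  | 0 => ∅
  | v+1 =>
    match (Finset.univ.filter fun p => (g p : ℕ) ≤ v ∧ p ∉ usedP g v).max with
    | none => usedP g v
    | some p => insert p (usedP g v)

def availP (g : Fin n → Fin n) (v : ℕ) : Finset (Fin n) :=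
  Finset.univ.filter fun p => (g p : ℕ) ≤ v ∧ p ∉ usedP g v

lemma mem_availP {g : Fin n → Fin n} {v : ℕ} {p : Fin n} :
    p ∈ availP g v ↔ (g p : ℕ) ≤ v ∧ p ∉ usedP g v := by simp [availP]

lemma usedP_succ (g : Fin n → Fin n) (v : ℕ) :
    usedP g (v+1) = match (availP g v).max with
      | none => usedP g v
      | some p => insert p (usedP g v) := rfl

lemma usedP_mono (g : Fin n → Fin n) (v : ℕ) : usedP g v ⊆ usedP g (v+1) := by
  rw [usedP_succ]
  rcases h : (availP g v).max with _ | p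
  · simp
  · simp only []
    exact Finset.subset_insert _ _

lemma usedP_le (g : Fin n → Fin n) {v w : ℕ} (h : v ≤ w) : usedP g v ⊆ usedP g w := by
  induction w with
  | zero => simpa [Nat.le_zero.mp h] using Finset.Subset.refl _
  | succ w ih =>
    rcases Nat.lt_or_ge v (w+1) with hv | hv
    · exact (ih (Nat.lt_succ_iff.mp hv)).trans (usedP_mono g w)
    · have : v = w + 1 := le_antisymm h hv
      subst this; exact Finset.Subset.refl _

lemma mem_usedP_lt {g : Fin n → Fin n} {v : ℕ} {p : Fin n} (h : p ∈ usedP g v) :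
    (g p : ℕ) < v := by
  induction v with
  | zero => simp [usedP] at h
  | succ v ih =>
    rw [usedP_succ] at h
    rcases hm : (availP g v).max with _ | q
    · rw [hm] at h
      exact Nat.lt_succ_of_lt (ih h)
    · rw [hm] at h
      rcases Finset.mem_insert.mp h with rfl | h
      · have := Finset.mem_of_max hm
        exact Nat.lt_succ_of_le (mem_availP.mp this).1
      · exact Nat.lt_succ_of_lt (ih h)

/-- `g` is "good": a parking-function-type condition. -/
def goodF (g : Fin n → Fin n) : Prop :=
  ∀ v : ℕ, v < n → v + 1 ≤ (Finset.univ.filter fun t => (g t : ℕ) ≤ v).card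

lemma usedP_succ_of_nonempty {g : Fin n → Fin n} {v : ℕ} (h : (availP g v).Nonempty) :
    usedP g (v+1) = insert ((availP g v).max' h) (usedP g v) := by
  rw [usedP_succ, ← Finset.coe_max' h]

lemma availP_nonempty {g : Fin n → Fin n} (hg : goodF g) {v : ℕ} (hv : v < n)
    (hc : (usedP g v).card = v) : (availP g v).Nonempty := by
  have hsub : usedP g v ⊆ Finset.univ.filter fun t => (g t : ℕ) ≤ v := fun p hp =>
    Finset.mem_filter.mpr ⟨Finset.mem_univ _, (mem_usedP_lt hp).le⟩
  have hlt : (usedP g v).card < (Finset.univ.filter fun t => (g t : ℕ) ≤ v).card := by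
    rw [hc]; exact lt_of_lt_of_le (Nat.lt_succ_self v) (hg v hv)
  have hns : ¬ ((Finset.univ.filter fun t => (g t : ℕ) ≤ v) ⊆ usedP g v) := fun h =>
    absurd (Finset.card_le_card h) (not_le.mpr hlt)
  obtain ⟨p, hp1, hp2⟩ := Finset.not_subset.mp hns
  exact ⟨p, mem_availP.mpr ⟨(Finset.mem_filter.mp hp1).2, hp2⟩⟩

lemma usedP_card {g : Fin n → Fin n} (hg : goodF g) : ∀ v ≤ n, (usedP g v).card = v := by
  intro v hv
  induction v with
  | zero => simp [usedP]
  | succ v ih =>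
    have hvn : v < n := Nat.lt_of_succ_le hv
    have hcard := ih hvn.le
    obtain ⟨p, hp⟩ := availP_nonempty hg hvn hcard
    rw [usedP_succ_of_nonempty ⟨p, hp⟩]
    rw [Finset.card_insert_of_notMem
      (mem_availP.mp (Finset.max'_mem _ ⟨p, hp⟩)).2, hcard]

noncomputable def pickF (g : Fin n → Fin n) (hg : goodF g) (v : Fin n) : Fin n :=
  (availP g (v : ℕ)).max' (availP_nonempty hg v.isLt (usedP_card hg _ v.isLt.le))

lemma pickF_mem {g : Fin n → Fin n} (hg : goodF g) (v : Fin n) :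
    pickF g hg v ∈ availP g (v : ℕ) := Finset.max'_mem _ _

lemma pickF_le {g : Fin n → Fin n} (hg : goodF g) (v : Fin n) {q : Fin n}
    (hq : q ∈ availP g (v : ℕ)) : q ≤ pickF g hg v := Finset.le_max' _ _ hq

lemma usedP_eq_image {g : Fin n → Fin n} (hg : goodF g) :
    ∀ v ≤ n, usedP g v =
      (Finset.univ.filter fun w : Fin n => (w : ℕ) < v).image (fun w => pickF g hg w) := by
  intro v hv
  induction v with
  | zero => simp [usedP]
  | succ v ih =>
    have hvn : v < n := Nat.lt_of_succ_le hv
    have hne : (availP g v).Nonempty := availP_nonempty hg hvn (usedP_card hg _ hvn.le)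
    have hfil : (Finset.univ.filter fun w : Fin n => (w : ℕ) < v + 1) =
        insert (⟨v, hvn⟩ : Fin n) (Finset.univ.filter fun w : Fin n => (w : ℕ) < v) := by
      ext w
      simp only [Finset.mem_filter, Finset.mem_univ, true_and, Finset.mem_insert, Fin.ext_iff]
      omega
    rw [usedP_succ_of_nonempty hne, hfil, Finset.image_insert, ih hvn.le]
    rfl

lemma pickF_strict_mono_ne {g : Fin n → Fin n} (hg : goodF g) {w v : Fin n} (h : w < v) :
    pickF g hg w ≠ pickF g hg v := by
  intro hEq
  have h1 : pickF g hg w ∈ usedP g ((w : ℕ) + 1) := by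
    rw [usedP_succ_of_nonempty (availP_nonempty hg w.isLt (usedP_card hg _ w.isLt.le))]
    exact Finset.mem_insert_self _ _
  have h2 : pickF g hg w ∈ usedP g (v : ℕ) := usedP_le g (by omega : (w:ℕ)+1 ≤ (v:ℕ)) h1
  rw [hEq] at h2
  exact (mem_availP.mp (pickF_mem hg v)).2 h2

lemma pickF_injective {g : Fin n → Fin n} (hg : goodF g) :
    Function.Injective (pickF g hg) := by
  intro v w h
  rcases lt_trichotomy v w with hvw | hvw | hvw
  · exact absurd h (pickF_strict_mono_ne hg hvw)
  · exact hvw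
  · exact absurd h.symm (pickF_strict_mono_ne hg hvw)

noncomputable def greedyPerm (g : Fin n → Fin n) (hg : goodF g) : Equiv.Perm (Fin n) :=
  (Equiv.ofBijective (pickF g hg)
    ((Fintype.bijective_iff_injective_and_card _).mpr ⟨pickF_injective hg, rfl⟩)).symm

lemma greedyPerm_symm_apply {g : Fin n → Fin n} (hg : goodF g) (v : Fin n) :
    (greedyPerm g hg).symm v = pickF g hg v := rfl

lemma greedyPerm_cond {g : Fin n → Fin n} (hg : goodF g) (k : Fin n) :
    jIdx n (greedyPerm g hg) k ≤ (g k : ℕ) ∧ (g k : ℕ) ≤ ((greedyPerm g hg) k : ℕ) := by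
  set σ := greedyPerm g hg with hσ
  set v : Fin n := σ k with hv
  have hk : pickF g hg v = k := by
    rw [← greedyPerm_symm_apply hg, hv, ← hσ]; exact σ.symm_apply_apply k
  have hkav : k ∈ availP g (v : ℕ) := hk ▸ pickF_mem hg v
  refine ⟨?_, (mem_availP.mp hkav).1⟩
  apply Finset.sup_le
  intro j hj
  obtain ⟨hjk, hσj⟩ : j < k ∧ σ j ≤ σ k := by
    simpa only [Finset.mem_filter, Finset.mem_univ, true_and] using hj
  by_contra hcon
  have hgk : (g k : ℕ) ≤ ((σ j : ℕ)) := by omega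
  set w : Fin n := σ j with hw
  have hwv : (w : ℕ) < (v : ℕ) := by
    have : w ≠ v := fun hEq => (ne_of_lt hjk) (σ.injective hEq)
    have : (w : ℕ) ≠ (v : ℕ) := fun hc => this (Fin.ext hc)
    have hle : (w : ℕ) ≤ (v : ℕ) := hσj
    omega
  have hkw : k ∈ availP g (w : ℕ) := by
    refine mem_availP.mpr ⟨hgk, fun hmem => ?_⟩
    exact (mem_availP.mp hkav).2 (usedP_le g hwv.le hmem)
  have : k ≤ pickF g hg w := pickF_le hg w hkw
  have hjw : pickF g hg w = j := by
    rw [← greedyPerm_symm_apply hg, hw, ← hσ]; exact σ.symm_apply_apply j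
  rw [hjw] at this
  exact absurd this (not_le.mpr hjk)

lemma cond_unique {g : Fin n → Fin n} (hg : goodF g) (σ : Equiv.Perm (Fin n))
    (hσ : ∀ k, jIdx n σ k ≤ (g k : ℕ) ∧ (g k : ℕ) ≤ (σ k : ℕ)) :
    σ = greedyPerm g hg := by
  have hsymm : ∀ v : Fin n, σ.symm v = pickF g hg v := by
    have main : ∀ m : ℕ, ∀ v : Fin n, (v : ℕ) < m → σ.symm v = pickF g hg v := by
      intro m
      induction m with
      | zero => intro v hv; omega
      | succ m ih =>
        intro v hv
        have IH : ∀ w : Fin n, w < v → σ.symm w = pickF g hg w := fun w hwv =>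
          ih w (by have := Fin.lt_def.mp hwv; omega)
        have himg : usedP g (v : ℕ) =
            (Finset.univ.filter fun w : Fin n => (w : ℕ) < (v : ℕ)).image σ.symm := by
          rw [usedP_eq_image hg _ v.isLt.le]
          apply Finset.image_congr
          intro w hw
          simp only [Finset.coe_filter, Set.mem_setOf_eq] at hw
          exact (IH w (Fin.lt_def.mpr hw.2)).symm
        set p' : Fin n := σ.symm v with hp'
        have hσp' : σ p' = v := σ.apply_symm_apply v
        have hp'mem : p' ∈ availP g (v : ℕ) := by
          refine mem_availP.mpr ⟨?_, ?_⟩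
          · have := (hσ p').2; rw [hσp'] at this; exact this
          · intro hmem
            rw [himg] at hmem
            obtain ⟨w, hw, hwp⟩ := Finset.mem_image.mp hmem
            have : w = v := σ.symm.injective hwp
            subst this
            exact absurd (Finset.mem_filter.mp hw).2 (by omega)
        have hmax : ∀ q ∈ availP g (v : ℕ), q ≤ p' := by
          intro q hq
          by_contra hcon
          have hlt : p' < q := not_le.mp hcon
          have hqv : (v : ℕ) < (σ q : ℕ) := by
            have h1 : σ q ≠ v := by
              intro hEq
              have : q = p' := by rw [hp', ← hEq]; exact (σ.symm_apply_apply q).symm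
              exact (ne_of_lt hlt) this.symm
            have h2 : ¬ ((σ q : ℕ) < (v : ℕ)) := by
              intro hc
              have : q ∈ usedP g (v : ℕ) := by
                rw [himg]
                exact Finset.mem_image.mpr ⟨σ q, Finset.mem_filter.mpr
                  ⟨Finset.mem_univ _, hc⟩, σ.symm_apply_apply q⟩
              exact (mem_availP.mp hq).2 this
            have : (σ q : ℕ) ≠ (v : ℕ) := fun hc => h1 (Fin.ext hc)
            omega
          have hsup : (v : ℕ) + 1 ≤ jIdx n σ q := by
            have hp'filter : p' ∈ Finset.univ.filter
                fun j : Fin n => j < q ∧ σ j ≤ σ q := by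
              refine Finset.mem_filter.mpr ⟨Finset.mem_univ _, hlt, ?_⟩
              rw [hσp']; exact le_of_lt (Fin.lt_def.mpr hqv)
            have h := Finset.le_sup (f := fun j : Fin n => (σ j : ℕ) + 1) hp'filter
            simp only [hσp'] at h
            exact h
          have := (hσ q).1
          have := (mem_availP.mp hq).1
          omega
        have hne := availP_nonempty hg v.isLt (usedP_card hg _ v.isLt.le)
        have h1 : p' ≤ (availP g (v : ℕ)).max' hne := Finset.le_max' _ _ hp'mem
        have h2 : (availP g (v : ℕ)).max' hne ≤ p' := hmax _ (Finset.max'_mem _ _)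
        exact le_antisymm h1 h2
    intro v; exact main n v v.isLt
  have h : σ.symm = (greedyPerm g hg).symm := Equiv.ext fun v => hsymm v
  have h2 := congrArg Equiv.symm h
  simpa using h2

lemma goodF_of_cond {g : Fin n → Fin n} (σ : Equiv.Perm (Fin n))
    (hσ : ∀ k, jIdx n σ k ≤ (g k : ℕ) ∧ (g k : ℕ) ≤ (σ k : ℕ)) : goodF g := by
  intro v hv
  have hsub : (Finset.univ.filter fun w : Fin n => (w : ℕ) ≤ v).image σ.symm ⊆
      Finset.univ.filter fun t => (g t : ℕ) ≤ v := by
    intro t ht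
    obtain ⟨w, hw, hwt⟩ := Finset.mem_image.mp ht
    have h1 : (g (σ.symm w) : ℕ) ≤ (σ (σ.symm w) : ℕ) := (hσ (σ.symm w)).2
    rw [σ.apply_symm_apply] at h1
    refine Finset.mem_filter.mpr ⟨Finset.mem_univ _, ?_⟩
    rw [← hwt]
    exact h1.trans (Finset.mem_filter.mp hw).2
  have hcard : ((Finset.univ.filter fun w : Fin n => (w : ℕ) ≤ v).image σ.symm).card
      = v + 1 := by
    rw [Finset.card_image_of_injective _ σ.symm.injective]
    have : (Finset.univ.filter fun w : Fin n => (w : ℕ) ≤ v) =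
        Finset.Iic (⟨v, hv⟩ : Fin n) := by
      ext w
      simp [Fin.le_def]
    rw [this, Fin.card_Iic]
  calc v + 1 = _ := hcard.symm
    _ ≤ _ := Finset.card_le_card hsub

open scoped Classical in
lemma card_cond_eq (g : Fin n → Fin n) :
    (Finset.univ.filter fun σ : Equiv.Perm (Fin n) =>
        ∀ k, jIdx n σ k ≤ (g k : ℕ) ∧ (g k : ℕ) ≤ (σ k : ℕ)).card
      = if goodF g then 1 else 0 := by
  split_ifs with h
  · rw [Finset.card_eq_one]
    refine ⟨greedyPerm g h, ?_⟩
    rw [Finset.eq_singleton_iff_unique_mem]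
    exact ⟨Finset.mem_filter.mpr ⟨Finset.mem_univ _, greedyPerm_cond h⟩,
      fun σ hσ => cond_unique h σ (Finset.mem_filter.mp hσ).2⟩
  · rw [Finset.card_eq_zero, Finset.filter_eq_empty_iff]
    exact fun {σ} _ hσ => h (goodF_of_cond σ hσ)

/-- fiber count function -/
def cntF (g : Fin n → Fin n) : Fin n → ℕ := fun i => (univ.filter fun t => g t = i).card

lemma sum_cntF_Iic (g : Fin n → Fin n) (j : Fin n) :
    ∑ i ∈ Finset.Iic j, cntF g i =
      (Finset.univ.filter fun t => (g t : ℕ) ≤ (j : ℕ)).card := by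
  rw [Finset.card_eq_sum_card_fiberwise
    (f := g) (t := Finset.Iic j)
    (fun t ht => Finset.mem_Iic.mpr (Fin.le_def.mpr (Finset.mem_filter.mp ht).2))]
  refine Finset.sum_congr rfl fun i hi => ?_
  show (univ.filter fun t => g t = i).card = _
  congr 1
  ext t
  simp only [Finset.mem_filter, Finset.mem_univ, true_and]
  constructor
  · intro h2
    refine ⟨?_, h2⟩
    rw [h2]
    exact Fin.le_def.mp (Finset.mem_Iic.mp hi)
  · intro ⟨_, h2⟩; exact h2

lemma sum_cntF (g : Fin n → Fin n) : ∑ i, cntF g i = n := by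
  have := Finset.card_eq_sum_card_fiberwise
    (f := g) (s := (univ : Finset (Fin n))) (t := univ) (fun t _ => mem_univ _)
  rw [Finset.card_univ, Fintype.card_fin] at this
  exact this.symm

lemma cntF_mem_Kn {g : Fin n → Fin n} (hg : goodF g) : cntF g ∈ Kn n := by
  rw [Kn, Finset.mem_filter]
  refine ⟨Fintype.mem_piFinset.mpr fun i => Finset.mem_range.mpr ?_, fun j hj => ?_, sum_cntF g⟩
  · calc cntF g i ≤ (univ : Finset (Fin n)).card := Finset.card_filter_le _ _
      _ = n := by rw [Finset.card_univ, Fintype.card_fin]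
      _ < n + 1 := Nat.lt_succ_self n
  · rw [sum_cntF_Iic]
    exact hg (j : ℕ) j.isLt

lemma goodF_of_cntF_mem_Kn {g : Fin n → Fin n} (h : cntF g ∈ Kn n) : goodF g := by
  intro v hv
  rw [Kn, Finset.mem_filter] at h
  rcases Nat.lt_or_ge (v + 1) n with hv1 | hv1
  · have := h.2.1 ⟨v, hv⟩ hv1
    rwa [sum_cntF_Iic] at this
  · have hvn : v + 1 = n := le_antisymm hv hv1
    have : (Finset.univ.filter fun t => (g t : ℕ) ≤ v) = univ := by
      ext t
      simp only [Finset.mem_filter, Finset.mem_univ, true_and, iff_true]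
      have := (g t).isLt
      omega
    rw [this, Finset.card_univ, Fintype.card_fin, hvn]

/-- `∑_{i ∈ σ_n} x(i) = ∑_{k ∈ K_n} (n choose k) x^k`. -/
theorem perm_sum_eq_multinomial_sum (n : ℕ) (hn : 1 ≤ n) (x : Fin n → ℝ) :
    ∑ σ : Equiv.Perm (Fin n), ∏ k : Fin n, xFactor n σ x k =
      ∑ k ∈ Kn n, (Nat.multinomial Finset.univ k : ℝ) * ∏ i, x i ^ k i := by
  classical
  have step1 : ∀ σ : Equiv.Perm (Fin n), ∏ k : Fin n, xFactor n σ x k =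
      ∑ g : Fin n → Fin n, if (∀ k, jIdx n σ k ≤ (g k : ℕ) ∧ (g k : ℕ) ≤ (σ k : ℕ))
        then ∏ k : Fin n, x (g k) else 0 := by
    intro σ
    unfold xFactor
    rw [Finset.prod_univ_sum]
    have hpi : Fintype.piFinset
        (fun k => Finset.univ.filter fun h : Fin n => jIdx n σ k ≤ (h : ℕ) ∧ (h : ℕ) ≤ (σ k : ℕ))
        = Finset.univ.filter
            (fun g : Fin n → Fin n => ∀ k, jIdx n σ k ≤ (g k : ℕ) ∧ (g k : ℕ) ≤ (σ k : ℕ)) := by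
      ext g
      simp [Fintype.mem_piFinset]
    rw [hpi, Finset.sum_filter]
  simp_rw [step1]
  rw [Finset.sum_comm]
  have step2 : ∀ g : Fin n → Fin n,
      (∑ σ : Equiv.Perm (Fin n), if (∀ k, jIdx n σ k ≤ (g k : ℕ) ∧ (g k : ℕ) ≤ (σ k : ℕ))
        then ∏ k : Fin n, x (g k) else 0)
      = (if goodF g then 1 else 0 : ℕ) • ∏ k : Fin n, x (g k) := by
    intro g
    rw [← Finset.sum_filter, Finset.sum_const, ← card_cond_eq g]
  simp_rw [step2]
  have step3 : (∑ g : Fin n → Fin n, ((if goodF g then 1 else 0 : ℕ) • ∏ k : Fin n, x (g k)))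
      = ∑ g ∈ Finset.univ.filter goodF, ∏ k : Fin n, x (g k) := by
    rw [Finset.sum_filter]
    refine Finset.sum_congr rfl fun g _ => ?_
    split_ifs <;> simp
  rw [step3]
  -- rewrite each product as a product of powers
  have step4 : ∀ g : Fin n → Fin n, ∏ k : Fin n, x (g k) = ∏ i, x i ^ cntF g i := by
    intro g
    rw [← Finset.prod_fiberwise_of_maps_to (g := g) (t := univ) (fun t _ => mem_univ _)
      (fun t => x (g t))]
    refine Finset.prod_congr rfl fun i _ => ?_
    rw [Finset.prod_congr rfl (fun t ht => by rw [(Finset.mem_filter.mp ht).2]),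
      Finset.prod_const]
    rfl
  calc ∑ g ∈ Finset.univ.filter goodF, ∏ k : Fin n, x (g k)
      = ∑ k ∈ Kn n, ∑ g ∈ (Finset.univ.filter goodF).filter (fun g => cntF g = k),
          ∏ t : Fin n, x (g t) :=
        (Finset.sum_fiberwise_of_maps_to
          (fun g hg => cntF_mem_Kn ((Finset.mem_filter.mp hg).2)) _).symm
    _ = ∑ k ∈ Kn n, ∑ g ∈ (Finset.univ.filter goodF).filter (fun g => cntF g = k),
          ∏ i, x i ^ k i := by
        refine Finset.sum_congr rfl fun k _ => Finset.sum_congr rfl fun g hg => ?_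
        rw [step4 g, show cntF g = k from (Finset.mem_filter.mp hg).2]
    _ = ∑ k ∈ Kn n, (Nat.multinomial Finset.univ k : ℝ) * ∏ i, x i ^ k i := by
        refine Finset.sum_congr rfl fun k hk => ?_
        rw [Finset.sum_const]
        have hfib : (Finset.univ.filter goodF).filter (fun g => cntF g = k)
            = Finset.univ.filter fun g : Fin n → Fin n =>
                ∀ i, (univ.filter fun t => g t = i).card = k i := by
          ext g
          simp only [Finset.mem_filter, Finset.mem_univ, true_and, Finset.filter_filter]
          constructor
          · intro ⟨_, hc⟩ i
            exact congrFun hc i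
          · intro h
            have hc : cntF g = k := funext h
            exact ⟨goodF_of_cntF_mem_Kn (hc ▸ hk), hc⟩
        have hk' := hk
        rw [Kn, Finset.mem_filter] at hk'
        rw [hfib, card_fiber_eq_multinomial k hk'.2.2, nsmul_eq_mul]
end

section
/- Let M be an s×n integer matrix whose columns span ℝˢ and whose convex hull does not contain the origin. Fix ϑ ∈ A(M) and let r be a positive integer such that (ϑ^m)^r = 1 for every column m of M not in M_ϑ. Let M̃_r be the matrix whose j-th column is m_j if m_j ∈ M_ϑ and r·m_j otherwise. Then for every θ ∈ A(M), the componentwise quotient θ/ϑ := (θ₁/ϑ₁,…,θ_s/ϑ_s) belongs to A(M̃_r). -/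
open scoped Classical

/-- `θ^y := θ₁^{y₁} ⋯ θ_s^{y_s}` for `θ ∈ ℂˢ` and `y ∈ ℤˢ`. -/
noncomputable def charP (s : ℕ) (θ : Fin s → ℂ) (y : Fin s → ℤ) : ℂ := ∏ i, θ i ^ y i

/-- The real vector associated with an integer column `c j`. -/
def rcol (s n : ℕ) (c : Fin n → Fin s → ℤ) (j : Fin n) : Fin s → ℝ :=
  fun i => (c j i : ℝ)

/-- `A(N)` for the integer matrix with columns `c`: the set of `θ ∈ (ℂ∖{0})ˢ` such that
the columns `m` with `θ^m = 1` span `ℝˢ`. -/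
def Aset (s n : ℕ) (c : Fin n → Fin s → ℤ) : Set (Fin s → ℂ) :=
  {θ | (∀ i, θ i ≠ 0) ∧
    Submodule.span ℝ (rcol s n c '' {j | charP s θ (c j) = 1}) = ⊤}

/-- The columns of `M̃_r`: `m_j` if `ϑ^{m_j} = 1`, and `r·m_j` otherwise. -/
noncomputable def tildeCols (s n : ℕ) (M : Matrix (Fin s) (Fin n) ℤ) (ϑ : Fin s → ℂ)
    (r : ℕ) (j : Fin n) : Fin s → ℤ :=
  if charP s ϑ (fun i => M i j) = 1 then (fun i => M i j) else (r : ℤ) • fun i => M i j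

lemma charP_div (s : ℕ) (θ ϑ : Fin s → ℂ) (y : Fin s → ℤ) :
    charP s (fun i => θ i / ϑ i) y = charP s θ y / charP s ϑ y := by
  simp [charP, div_zpow, Finset.prod_div_distrib]

lemma charP_smul (s : ℕ) (θ : Fin s → ℂ) (y : Fin s → ℤ) (r : ℕ) :
    charP s θ ((r : ℤ) • y) = (charP s θ y) ^ r := by
  unfold charP
  rw [← Finset.prod_pow]
  refine Finset.prod_congr rfl fun i _ => ?_
  have : ((r : ℤ) • y) i = y i * (r : ℤ) := by simp [mul_comm]
  rw [this, zpow_mul, zpow_natCast]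

/-- If `ϑ ∈ A(M)` and `r` is a positive integer with `(ϑ^m)^r = 1` for every column `m`
of `M` not in `M_ϑ`, then for every `θ ∈ A(M)` the componentwise quotient `θ/ϑ` belongs
to `A(M̃_r)`. -/
theorem quotient_mem_Aset_tilde (s n : ℕ) (M : Matrix (Fin s) (Fin n) ℤ)
    (hspan : Submodule.span ℝ (Set.range (rcol s n fun j i => M i j)) = ⊤)
    (hhull : (0 : Fin s → ℝ) ∉ convexHull ℝ (Set.range (rcol s n fun j i => M i j)))
    (ϑ : Fin s → ℂ) (hϑ : ϑ ∈ Aset s n fun j i => M i j)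
    (r : ℕ) (hr : 0 < r)
    (hroot : ∀ j : Fin n, charP s ϑ (fun i => M i j) ≠ 1 →
      (charP s ϑ fun i => M i j) ^ r = 1) :
    ∀ θ ∈ Aset s n fun j i => M i j,
      (fun i => θ i / ϑ i) ∈ Aset s n (tildeCols s n M ϑ r) := by
  intro θ hθ
  obtain ⟨hθ0, hθspan⟩ := hθ
  obtain ⟨hϑ0, _⟩ := hϑ
  refine ⟨fun i => div_ne_zero (hθ0 i) (hϑ0 i), ?_⟩
  rw [eq_top_iff, ← hθspan]
  refine Submodule.span_le.mpr ?_
  rintro v ⟨j, hj, rfl⟩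
  have hj' : charP s θ (fun i => M i j) = 1 := hj
  by_cases h : charP s ϑ (fun i => M i j) = 1
  · apply Submodule.subset_span
    refine ⟨j, ?_, ?_⟩
    · show charP s (fun i => θ i / ϑ i) (tildeCols s n M ϑ r j) = 1
      simp [tildeCols, h, charP_div, hj']
    · funext i
      simp [rcol, tildeCols, h]
  · have hmem : charP s (fun i => θ i / ϑ i) (tildeCols s n M ϑ r j) = 1 := by
      have h1 : tildeCols s n M ϑ r j = (r : ℤ) • fun i => M i j := if_neg h
      rw [h1, charP_smul, charP_div, hj', div_pow, one_pow, hroot j h, div_one]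
    have hv : rcol s n (tildeCols s n M ϑ r) j = (r : ℝ) • rcol s n (fun j i => M i j) j := by
      funext i
      simp [rcol, tildeCols, if_neg h, mul_comm]
    have hr0 : (r : ℝ) ≠ 0 := Nat.cast_ne_zero.mpr hr.ne'
    have hin : rcol s n (tildeCols s n M ϑ r) j ∈
        Submodule.span ℝ (rcol s n (tildeCols s n M ϑ r) ''
          {j | charP s (fun i => θ i / ϑ i) (tildeCols s n M ϑ r j) = 1}) :=
      Submodule.subset_span ⟨j, hmem, rfl⟩
    have := Submodule.smul_mem _ ((r : ℝ)⁻¹) hin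
    rwa [hv, smul_smul, inv_mul_cancel₀ hr0, one_smul] at this
end

section
/- Let M be an s×n integer matrix whose columns span ℝˢ and whose convex hull does not contain the origin. Fix ϑ ∈ A(M) and let r be a positive integer such that (ϑ^m)^r = 1 for every column m of M not in M_ϑ. Let M̃_r be the matrix whose j-th column is m_j if m_j ∈ M_ϑ and r·m_j otherwise. Then for every θ ∈ A(M), D(M_θ) ⊆ D((M̃_r)_{θ/ϑ}), i.e., every infinitely differentiable f : ℝˢ → ℂ with D_Y f = 0 for all Y ∈ 𝒴(M_θ) also satisfies D_Y f = 0 for all Y ∈ 𝒴((M̃_r)_{θ/ϑ}). -/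
open scoped Classical

/-- The iterated directional-derivative operator `D_Y = ∏_{y ∈ Y} D_y`, applied along a
list of direction vectors (`D_y f = ∑_j y_j ∂_j f`; for smooth `f` the factors
commute). -/
noncomputable def DY {F : Type*} [NormedAddCommGroup F] [NormedSpace ℝ F]
    (s : ℕ) (l : List (Fin s → ℝ)) (f : (Fin s → ℝ) → F) : (Fin s → ℝ) → F :=
  l.foldr (fun y g => fun x => fderiv ℝ g x y) f

-- auxiliary lemmas
lemma DY_nil {s : ℕ} (f : (Fin s → ℝ) → ℂ) : DY s [] f = f := rfl

lemma DY_cons {s : ℕ} (y : Fin s → ℝ) (l : List (Fin s → ℝ)) (f : (Fin s → ℝ) → ℂ) :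
    DY s (y :: l) f = fun x => fderiv ℝ (DY s l f) x y := rfl

lemma DY_contDiff {s : ℕ} (l : List (Fin s → ℝ)) {f : (Fin s → ℝ) → ℂ}
    (hf : ContDiff ℝ (⊤ : ℕ∞) f) : ContDiff ℝ (⊤ : ℕ∞) (DY s l f) := by
  induction l with
  | nil => exact hf
  | cons y l ih => exact (ih.fderiv_right (by simp)).clm_apply contDiff_const

lemma Dop_comm {s : ℕ} {f : (Fin s → ℝ) → ℂ} (hf : ContDiff ℝ (⊤ : ℕ∞) f) (y z : Fin s → ℝ) :
    (fun x => fderiv ℝ (fun x' => fderiv ℝ f x' z) x y)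
      = (fun x => fderiv ℝ (fun x' => fderiv ℝ f x' y) x z) := by
  have hd : Differentiable ℝ (fderiv ℝ f) :=
    (hf.fderiv_right (m := (⊤ : ℕ∞)) (by simp)).differentiable (by simp)
  funext x
  have key : ∀ v w : Fin s → ℝ,
      fderiv ℝ (fun x' => fderiv ℝ f x' w) x v = fderiv ℝ (fderiv ℝ f) x v w := by
    intro v w
    rw [fderiv_clm_apply (hd x) (differentiableAt_const w)]
    simp
  rw [key, key]
  exact second_derivative_symmetric (fun p => (hf.differentiable (by simp) p).hasFDerivAt)
    ((hd x).hasFDerivAt) y z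

lemma DY_perm {s : ℕ} {l₁ l₂ : List (Fin s → ℝ)} (h : l₁.Perm l₂)
    {f : (Fin s → ℝ) → ℂ} (hf : ContDiff ℝ (⊤ : ℕ∞) f) : DY s l₁ f = DY s l₂ f := by
  induction h with
  | nil => rfl
  | cons x h ih => rw [DY_cons, DY_cons, ih]
  | swap x y l => exact Dop_comm (DY_contDiff l hf) y x
  | trans h₁ h₂ ih₁ ih₂ => rw [ih₁, ih₂]

lemma DY_zero {s : ℕ} (l : List (Fin s → ℝ)) : DY s l (0 : (Fin s → ℝ) → ℂ) = 0 := by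
  induction l with
  | nil => rfl
  | cons y l ih =>
    rw [DY_cons, ih]
    funext x
    show fderiv ℝ (fun _ => (0 : ℂ)) x y = 0
    simp

lemma DY_append {s : ℕ} (l₁ l₂ : List (Fin s → ℝ)) (f : (Fin s → ℝ) → ℂ) :
    DY s (l₁ ++ l₂) f = DY s l₁ (DY s l₂ f) := by
  simp [DY, List.foldr_append]

lemma DY_scale {s : ℕ} {ι : Type*} (l : List ι) (c : ι → ℝ) (v : ι → Fin s → ℝ)
    {f : (Fin s → ℝ) → ℂ} (hf : ContDiff ℝ (⊤ : ℕ∞) f) :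
    DY s (l.map fun j => c j • v j) f = (l.map c).prod • DY s (l.map v) f := by
  induction l with
  | nil => simp [DY]
  | cons a l ih =>
    simp only [List.map_cons, List.prod_cons, DY_cons, ih]
    funext x
    have hg : DifferentiableAt ℝ (DY s (l.map v) f) x :=
      ((DY_contDiff _ hf).differentiable (by simp) x)
    have : fderiv ℝ ((l.map c).prod • DY s (l.map v) f) x
        = (l.map c).prod • fderiv ℝ (DY s (l.map v) f) x := by
      exact fderiv_fun_const_smul hg ((l.map c).prod : ℝ)
    rw [this]
    simp only [ContinuousLinearMap.coe_smul', Pi.smul_apply, Pi.smul_apply,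
      (fderiv ℝ (DY s (l.map v) f) x).map_smul, mul_smul]
    rw [smul_comm]

/-- If `ϑ ∈ A(M)` and `r ≥ 1` satisfies `(ϑ^m)^r = 1` for all columns `m ∉ M_ϑ`, then
for every `θ ∈ A(M)`, `D(M_θ) ⊆ D((M̃_r)_{θ/ϑ})`: every smooth `f : ℝˢ → ℂ`
annihilated by `D_Y` for all `Y ∈ 𝒴(M_θ)` is also annihilated by `D_Y` for all
`Y ∈ 𝒴((M̃_r)_{θ/ϑ})`. -/
theorem D_Mtheta_subset_D_tilde (s n : ℕ) (M : Matrix (Fin s) (Fin n) ℤ)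
    (hspan : Submodule.span ℝ (Set.range (rcol s n fun j i => M i j)) = ⊤)
    (hhull : (0 : Fin s → ℝ) ∉ convexHull ℝ (Set.range (rcol s n fun j i => M i j)))
    (ϑ : Fin s → ℂ) (hϑ : ϑ ∈ Aset s n fun j i => M i j)
    (r : ℕ) (hr : 0 < r)
    (hroot : ∀ j : Fin n, charP s ϑ (fun i => M i j) ≠ 1 →
      (charP s ϑ fun i => M i j) ^ r = 1) :
    ∀ θ ∈ Aset s n fun j i => M i j,
      ∀ f : (Fin s → ℝ) → ℂ, ContDiff ℝ (⊤ : ℕ∞) f →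
        (∀ Y : Finset (Fin n),
          (↑Y : Set (Fin n)) ⊆ {j | charP s θ (fun i => M i j) = 1} →
          Submodule.span ℝ ((rcol s n fun j i => M i j) ''
            ({j | charP s θ (fun i => M i j) = 1} \ ↑Y)) ≠ ⊤ →
          DY s (Y.toList.map (rcol s n fun j i => M i j)) f = 0) →
        (∀ Y : Finset (Fin n),
          (↑Y : Set (Fin n)) ⊆
            {j | charP s (fun i => θ i / ϑ i) (tildeCols s n M ϑ r j) = 1} →
          Submodule.span ℝ (rcol s n (tildeCols s n M ϑ r) ''
            ({j | charP s (fun i => θ i / ϑ i) (tildeCols s n M ϑ r j) = 1} \ ↑Y)) ≠ ⊤ →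
          DY s (Y.toList.map (rcol s n (tildeCols s n M ϑ r))) f = 0) := by
  intro θ hθ f hf hyp Y hYsub hYspan
  -- notation
  set rcolM := rcol s n (fun j i => M i j) with hrcolM
  set rcolT := rcol s n (tildeCols s n M ϑ r) with hrcolT
  have charP_div : ∀ y : Fin s → ℤ,
      charP s (fun i => θ i / ϑ i) y = charP s θ y / charP s ϑ y := by
    intro y
    unfold charP
    rw [← Finset.prod_div_distrib]
    exact Finset.prod_congr rfl fun i _ => div_zpow _ _ _
  have charP_smul : ∀ (η : Fin s → ℂ) (y : Fin s → ℤ),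
      charP s η ((r : ℤ) • y) = (charP s η y) ^ r := by
    intro η y
    unfold charP
    rw [← Finset.prod_pow]
    refine Finset.prod_congr rfl fun i _ => ?_
    show η i ^ ((r : ℤ) * y i) = _
    rw [mul_comm, zpow_mul, zpow_natCast]
  -- indices with θ^m = 1 are indices with (θ/ϑ)^{m̃} = 1
  have hPsub : ∀ j : Fin n, charP s θ (fun i => M i j) = 1 →
      charP s (fun i => θ i / ϑ i) (tildeCols s n M ϑ r j) = 1 := by
    intro j hj
    unfold tildeCols
    by_cases h : charP s ϑ (fun i => M i j) = 1
    · rw [if_pos h, charP_div, hj, h, div_one]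
    · rw [if_neg h, charP_div, charP_smul, charP_smul, hroot j h, hj, one_pow, div_one]
  -- scaling factors
  set c : Fin n → ℝ := fun j => if charP s ϑ (fun i => M i j) = 1 then 1 else (r : ℝ)
    with hc
  have hc0 : ∀ j, c j ≠ 0 := by
    intro j
    rw [hc]
    dsimp only
    split
    · exact one_ne_zero
    · exact Nat.cast_ne_zero.mpr hr.ne'
  have hcol : ∀ j, rcolT j = c j • rcolM j := by
    intro j
    funext i
    rw [hrcolT, hrcolM, hc]
    unfold rcol tildeCols
    dsimp only
    by_cases h : charP s ϑ (fun i => M i j) = 1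
    · rw [if_pos h, if_pos h]; simp
    · rw [if_neg h, if_neg h]; simp
  -- the filtered set
  set P : Fin n → Prop := fun j => charP s θ (fun i => M i j) = 1 with hP
  set Y' : Finset (Fin n) := Y.filter P with hY'
  have hY'sub : (↑Y' : Set (Fin n)) ⊆ {j | charP s θ (fun i => M i j) = 1} := by
    intro j hj
    have := Finset.mem_filter.mp (by exact_mod_cast hj)
    exact this.2
  have hY'span : Submodule.span ℝ (rcolM ''
      ({j | charP s θ (fun i => M i j) = 1} \ ↑Y')) ≠ ⊤ := by
    intro htop
    apply hYspan
    have hle : Submodule.span ℝ (rcolM '' ({j | charP s θ (fun i => M i j) = 1} \ ↑Y'))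
        ≤ Submodule.span ℝ (rcolT ''
          ({j | charP s (fun i => θ i / ϑ i) (tildeCols s n M ϑ r j) = 1} \ ↑Y)) := by
      rw [Submodule.span_le]
      rintro v ⟨j, ⟨hjS, hjY'⟩, rfl⟩
      have hjY : j ∉ (↑Y : Set (Fin n)) := by
        intro hjmem
        exact hjY' (by
          simp only [hY', Finset.coe_filter, Set.mem_setOf_eq]
          exact ⟨by exact_mod_cast hjmem, hjS⟩)
      have hmem : rcolT j ∈ (rcolT ''
          ({j | charP s (fun i => θ i / ϑ i) (tildeCols s n M ϑ r j) = 1} \ ↑Y)) :=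
        ⟨j, ⟨hPsub j hjS, hjY⟩, rfl⟩
      have : rcolM j = (c j)⁻¹ • rcolT j := by
        rw [hcol j, smul_smul, inv_mul_cancel₀ (hc0 j), one_smul]
      rw [this]
      exact Submodule.smul_mem _ _ (Submodule.subset_span hmem)
    exact top_unique (htop ▸ hle)
  have h1 : DY s (Y'.toList.map rcolM) f = 0 := hyp Y' hY'sub hY'span
  -- permutation of Y.toList
  have hperm : Y.toList.Perm ((Y.filter fun j => ¬ P j).toList ++ Y'.toList) := by
    apply Multiset.coe_eq_coe.mp
    show (Y.toList : Multiset (Fin n))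
      = ((Y.filter fun j => ¬ P j).toList : List (Fin n)) + (Y'.toList : List (Fin n))
    rw [hY']
    simp only [Finset.coe_toList, Finset.filter_val]
    rw [add_comm]
    exact (Multiset.filter_add_not _ _).symm
  have h2 : DY s (Y.toList.map rcolM) f = 0 := by
    rw [DY_perm (hperm.map rcolM) hf, List.map_append, DY_append, h1, DY_zero]
  have hmapeq : Y.toList.map rcolT = Y.toList.map (fun j => c j • rcolM j) :=
    List.map_congr_left fun j _ => hcol j
  rw [hmapeq, DY_scale Y.toList c rcolM hf, h2, smul_zero]
end

section
/- Let M be an s×n integer matrix of rank s with columns m₁,…,m_n. Then the number of θ ∈ (ℂ∖{0})ˢ satisfying θ^{m_j} = 1 for every j = 1,…,n equals gcd{|det Y| : Y an s×s matrix formed by s columns of M with det Y ≠ 0}. -/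
open Matrix in
lemma det_expand_aux {s n : ℕ} (c : Matrix (Fin s) (Fin n) ℤ) (V : Fin n → Fin s → ℤ) :
    (Matrix.of fun i j => ∑ k, c i k * V k j).det
      = ∑ g : Fin s → Fin n, (∏ i, c i (g i)) * (Matrix.of fun i j => V (g i) j).det := by
  have h : (Matrix.of fun i j => ∑ k, c i k * V k j : Matrix (Fin s) (Fin s) ℤ)
      = fun i => ∑ k, c i k • V k := by
    ext i j; simp [Finset.sum_apply]
  show Matrix.detRowAlternating _ = _
  rw [h]
  calc Matrix.detRowAlternating (fun i => ∑ k, c i k • V k)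
      = (Matrix.detRowAlternating (R := ℤ) (n := Fin s)).toMultilinearMap
          (fun i => ∑ k : Fin n, (fun (i : Fin s) (k : Fin n) => c i k • V k) i k) := rfl
    _ = ∑ g : (Fin s) → Fin n, (Matrix.detRowAlternating (R := ℤ) (n := Fin s)).toMultilinearMap
          (fun i => c i (g i) • V (g i)) := MultilinearMap.map_sum _ _
    _ = ∑ g : Fin s → Fin n, (∏ i, c i (g i)) * (Matrix.of fun i j => V (g i) j).det := by
        refine Finset.sum_congr rfl fun g _ => ?_
        rw [MultilinearMap.map_smul_univ]
        simp only [smul_eq_mul]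
        rfl

open Matrix in
lemma det_mul_expand {s n : ℕ} (X : Matrix (Fin s) (Fin n) ℤ) (Y : Matrix (Fin n) (Fin s) ℤ) :
    (X * Y).det = ∑ g : Fin s → Fin n, (∏ i, Y (g i) i) * (X.submatrix id g).det := by
  rw [← Matrix.det_transpose]
  have h : (X * Y)ᵀ = Matrix.of fun i j => ∑ k, Yᵀ i k * Xᵀ k j := by
    ext i j; simp [Matrix.mul_apply, Matrix.transpose_apply, mul_comm]
  rw [h]; refine (det_expand_aux Yᵀ Xᵀ).trans ?_
  refine Finset.sum_congr rfl fun g _ => ?_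
  congr 1
  rw [← Matrix.det_transpose]
  congr 1

lemma zpow_sum' {G : Type*} [CommGroup G] (u : G) {ι : Type*} (S : Finset ι) (t : ι → ℤ) :
    u ^ (∑ j ∈ S, t j) = ∏ j ∈ S, u ^ t j := by
  classical
  induction S using Finset.induction with
  | empty => simp
  | @insert _ _ h ih => rw [Finset.sum_insert h, Finset.prod_insert h, zpow_add, ih]

section count

variable {s n : ℕ} (M : Matrix (Fin s) (Fin n) ℤ)

/-- The hom attached to a family of units. -/
noncomputable def Phom (u : Fin s → ℂˣ) : (Fin s → ℤ) →+ Additive ℂˣ where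
  toFun y := Additive.ofMul (∏ i, u i ^ y i)
  map_zero' := by simp
  map_add' y z := by
    simp only [Pi.add_apply, zpow_add, Finset.prod_mul_distrib]
    rfl

lemma Phom_apply (u : Fin s → ℂˣ) (y : Fin s → ℤ) :
    Phom u y = Additive.ofMul (∏ i, u i ^ y i) := rfl

lemma Phom_eq_comp {H : AddSubgroup (Fin s → ℤ)} (ρ : (Fin s → ℤ) ⧸ H →+ Additive ℂˣ) :
    Phom (fun i => Additive.toMul (ρ (QuotientAddGroup.mk (Pi.single i 1)))) =
      ρ.comp (QuotientAddGroup.mk' H) := by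
  apply AddMonoidHom.functions_ext
  intro i x
  have h1 : (Pi.single i x : Fin s → ℤ) = x • Pi.single i 1 := by
    ext k
    by_cases h : k = i
    · subst h; simp
    · simp [Pi.single_apply, h]
  rw [h1, map_zsmul, Phom_apply, map_zsmul]
  apply Additive.toMul.injective
  rw [toMul_zsmul, toMul_zsmul]
  congr 1
  rw [Finset.prod_eq_single i (fun b _ hb => by simp [Pi.single_apply, hb]) (by simp)]
  simp

end count


lemma card_solutions {s n : ℕ} (M : Matrix (Fin s) (Fin n) ℤ)
    (hfin : (LinearMap.range M.mulVecLin).toAddSubgroup.index ≠ 0) :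
    Nat.card {θ : Fin s → ℂ // (∀ i, θ i ≠ 0) ∧ ∀ j, ∏ i, θ i ^ M i j = 1}
      = (LinearMap.range M.mulVecLin).toAddSubgroup.index := by
  classical
  set H : AddSubgroup (Fin s → ℤ) := (LinearMap.range M.mulVecLin).toAddSubgroup with hH
  have hidx : H.index = Nat.card ((Fin s → ℤ) ⧸ H) := rfl
  have hQfin : Finite ((Fin s → ℤ) ⧸ H) := (Nat.card_ne_zero.mp (hidx ▸ hfin)).2
  have hcol : ∀ j, (fun i => M i j) ∈ H := by
    intro j
    refine ⟨Pi.single j 1, ?_⟩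
    ext i
    simp [Matrix.mulVecLin_apply, Matrix.mulVec, dotProduct, Pi.single_apply]
  -- members
  have hmem : ∀ ρ : ((Fin s → ℤ) ⧸ H) →+ Additive ℂˣ,
      (∀ i, (((Additive.toMul (ρ (QuotientAddGroup.mk (Pi.single i 1)))) : ℂˣ) : ℂ) ≠ 0) ∧
      (∀ j, ∏ i, (((Additive.toMul (ρ (QuotientAddGroup.mk (Pi.single i 1)))) : ℂˣ) : ℂ) ^ M i j = 1) := by
    intro ρ
    refine ⟨fun i => Units.ne_zero _, fun j => ?_⟩
    have h0 : (QuotientAddGroup.mk (fun i => M i j) : (Fin s → ℤ) ⧸ H) = 0 :=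
      (QuotientAddGroup.eq_zero_iff _).mpr (hcol j)
    have h1 := DFunLike.congr_fun (Phom_eq_comp ρ) (fun i => M i j)
    rw [Phom_apply] at h1
    have h2 : (∏ i, ((Additive.toMul (ρ (QuotientAddGroup.mk (Pi.single i 1)))) : ℂˣ) ^ (M i j)) = 1 := by
      apply Additive.ofMul.injective
      rw [h1]
      simp [AddMonoidHom.comp_apply, h0]
    calc ∏ i, (((Additive.toMul (ρ (QuotientAddGroup.mk (Pi.single i 1)))) : ℂˣ) : ℂ) ^ (M i j)
        = ∏ i, ((((Additive.toMul (ρ (QuotientAddGroup.mk (Pi.single i 1)))) : ℂˣ) ^ (M i j) : ℂˣ) : ℂ) := by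
          exact Finset.prod_congr rfl fun i _ => (Units.val_zpow_eq_zpow_val _ _).symm
      _ = ((∏ i, ((Additive.toMul (ρ (QuotientAddGroup.mk (Pi.single i 1)))) : ℂˣ) ^ (M i j) : ℂˣ) : ℂ) :=
          (map_prod (Units.coeHom ℂ) _ _).symm
      _ = 1 := by rw [h2]; simp
  set F : (((Fin s → ℤ) ⧸ H) →+ Additive ℂˣ) →
      {θ : Fin s → ℂ // (∀ i, θ i ≠ 0) ∧ ∀ j, ∏ i, θ i ^ M i j = 1} :=
    fun ρ => ⟨fun i => (((Additive.toMul (ρ (QuotientAddGroup.mk (Pi.single i 1)))) : ℂˣ) : ℂ),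
      hmem ρ⟩ with hF
  have hFbij : Function.Bijective F := by
    constructor
    · intro ρ ρ' hρ
      have h1 : ∀ i, Additive.toMul (ρ (QuotientAddGroup.mk (Pi.single i 1)))
          = Additive.toMul (ρ' (QuotientAddGroup.mk (Pi.single i 1))) := by
        intro i
        have h := congrArg (fun z => z.1 i) hρ
        simp only [hF] at h
        exact Units.ext h
      have h3 := (Phom_eq_comp ρ).symm.trans
        ((by rw [funext h1] : Phom (fun i => Additive.toMul (ρ (QuotientAddGroup.mk (Pi.single i 1)))) = Phom _).trans (Phom_eq_comp ρ'))
      refine DFunLike.ext _ _ fun q => ?_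
      induction q using QuotientAddGroup.induction_on with
      | H y => exact DFunLike.congr_fun h3 y
    · rintro ⟨θ, hθ0, hθ1⟩
      set u : Fin s → ℂˣ := fun i => Units.mk0 (θ i) (hθ0 i) with hu
      have hu1 : ∀ j, ∏ i, u i ^ M i j = 1 := by
        intro j
        apply Units.ext
        calc ((∏ i, u i ^ M i j : ℂˣ) : ℂ) = ∏ i, ((u i ^ M i j : ℂˣ) : ℂ) :=
            map_prod (Units.coeHom ℂ) _ _
          _ = ∏ i, θ i ^ M i j := by
            exact Finset.prod_congr rfl fun i _ => by
              rw [Units.val_zpow_eq_zpow_val]; rfl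
          _ = 1 := hθ1 j
          _ = ((1 : ℂˣ) : ℂ) := rfl
      have hker : ∀ y ∈ H, Phom u y = 0 := by
        rintro y ⟨v, rfl⟩
        rw [Phom_apply]
        apply Additive.ofMul.injective
        show _ = Additive.toMul (0 : Additive ℂˣ)
        simp only [toMul_ofMul, toMul_zero]
        calc ∏ i, u i ^ (M.mulVecLin v i)
            = ∏ i, ∏ j, (u i ^ M i j) ^ v j := by
              refine Finset.prod_congr rfl fun i _ => ?_
              rw [show M.mulVecLin v i = ∑ j, M i j * v j from rfl, zpow_sum']
              exact Finset.prod_congr rfl fun j _ => by rw [zpow_mul]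
          _ = ∏ j, (∏ i, u i ^ M i j) ^ v j := by
              rw [Finset.prod_comm]
              exact Finset.prod_congr rfl fun j _ => Finset.prod_zpow _ _ _
          _ = 1 := by simp [hu1]
      refine ⟨QuotientAddGroup.lift H (Phom u) (fun y hy => (AddMonoidHom.mem_ker).mpr (hker y hy)), ?_⟩
      apply Subtype.ext
      funext i
      show (((Additive.toMul (QuotientAddGroup.lift H (Phom u) (fun y hy => (AddMonoidHom.mem_ker).mpr (hker y hy))
        (QuotientAddGroup.mk (Pi.single i 1)))) : ℂˣ) : ℂ) = θ i
      rw [QuotientAddGroup.lift_mk, Phom_apply]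
      rw [Finset.prod_eq_single i (fun b _ hb => by simp [Pi.single_apply, hb]) (by simp)]
      simp [hu]
  rw [← Nat.card_eq_of_bijective F hFbij, hidx]
  rw [Nat.card_congr (AddMonoidHom.toMultiplicativeLeft :
    (((Fin s → ℤ) ⧸ H) →+ Additive ℂˣ) ≃ (Multiplicative ((Fin s → ℤ) ⧸ H) →* ℂˣ))]
  haveI : Finite (Multiplicative ((Fin s → ℤ) ⧸ H)) := hQfin
  haveI : NeZero ((Monoid.exponent (Multiplicative ((Fin s → ℤ) ⧸ H)) : ℕ) : ℂ) :=
    ⟨Nat.cast_ne_zero.mpr (Monoid.exponent_ne_zero_of_finite)⟩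
  obtain ⟨e⟩ := CommGroup.monoidHom_mulEquiv_of_hasEnoughRootsOfUnity
    (Multiplicative ((Fin s → ℤ) ⧸ H)) ℂ
  rw [Nat.card_congr e.toEquiv]
  rfl
/-- If `M` is an `s×n` integer matrix of rank `s`, then the number of
`θ ∈ (ℂ∖{0})ˢ` with `θ^{m_j} = 1` for every column `m_j` of `M` equals
`gcd{|det Y| : Y an s×s matrix formed by s columns of M with det Y ≠ 0}`. -/
theorem card_characters_eq_gcd_det (s n : ℕ) (M : Matrix (Fin s) (Fin n) ℤ)
    (hrank : (M.map (Int.cast : ℤ → ℝ)).rank = s) :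
    Nat.card {θ : Fin s → ℂ // (∀ i, θ i ≠ 0) ∧ ∀ j, ∏ i, θ i ^ M i j = 1} =
      Finset.gcd (Finset.univ.filter fun g : Fin s → Fin n => (M.submatrix id g).det ≠ 0)
        (fun g => (M.submatrix id g).det.natAbs) := by
  classical
  set N : Submodule ℤ (Fin s → ℤ) := LinearMap.range M.mulVecLin with hN
  have hcol : ∀ j, (fun i => M i j) ∈ N := by
    intro j
    refine ⟨Pi.single j 1, ?_⟩
    ext i
    simp [Matrix.mulVecLin_apply, Matrix.mulVec, dotProduct, Pi.single_apply]
  obtain ⟨m, snf⟩ := N.smithNormalForm (Pi.basisFun ℤ (Fin s))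
  set X0 : Matrix (Fin m) (Fin n) ℤ :=
    Matrix.of (fun i j => snf.bN.repr ⟨fun k => M k j, hcol j⟩ i) with hX0
  set C : Matrix (Fin s) (Fin m) ℤ := Matrix.of (fun k i => (snf.bN i : Fin s → ℤ) k) with hC0
  have hMC : M = C * X0 := by
    ext k j
    have h := congrArg (fun z : N => (z : Fin s → ℤ) k)
      (snf.bN.sum_repr ⟨fun k => M k j, hcol j⟩)
    simp only [AddSubmonoidClass.coe_finset_sum, SetLike.val_smul, Finset.sum_apply,
      Pi.smul_apply, smul_eq_mul] at h
    rw [Matrix.mul_apply, ← h]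
    exact Finset.sum_congr rfl fun i _ => mul_comm _ _
  have hm : m = s := by
    refine le_antisymm (by simpa using Fintype.card_le_of_embedding snf.f) ?_
    have h1 : M.map (Int.cast : ℤ → ℝ)
        = (C.map (Int.cast : ℤ → ℝ)) * (X0.map (Int.cast : ℤ → ℝ)) := by
      rw [hMC]
      exact Matrix.map_mul (f := Int.castRingHom ℝ)
    calc s = (M.map (Int.cast : ℤ → ℝ)).rank := hrank.symm
      _ ≤ (C.map (Int.cast : ℤ → ℝ)).rank := by rw [h1]; exact Matrix.rank_mul_le_left _ _
      _ ≤ Fintype.card (Fin m) := Matrix.rank_le_card_width _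
      _ = m := Fintype.card_fin m
  subst hm
  have ha : ∀ i, snf.a i ≠ 0 := by
    intro i hai
    refine snf.bN.ne_zero i ?_
    have h := snf.snf i
    rw [hai, zero_smul] at h
    exact Subtype.ext h
  have hidx : N.toAddSubgroup.index = (∏ i, snf.a i).natAbs := by
    rw [snf.toAddSubgroup_index_eq_pow_mul_prod]
    simp only [Fintype.card_fin, Nat.sub_self, pow_zero, one_mul,
      Ideal.span_singleton_toAddSubgroup_eq_zmultiples, Int.index_zmultiples]
    exact (map_prod Int.natAbsHom _ Finset.univ).symm
  have hidx0 : N.toAddSubgroup.index ≠ 0 := by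
    rw [hidx, Int.natAbs_ne_zero]
    exact Finset.prod_ne_zero_iff.mpr fun i _ => ha i
  set σ : Equiv.Perm (Fin m) := Equiv.ofBijective snf.f snf.f.injective.bijective_of_finite
    with hσ
  set B : Matrix (Fin m) (Fin m) ℤ := (Pi.basisFun ℤ (Fin m)).toMatrix snf.bM with hB
  have hBunit : IsUnit B.det := by
    apply Matrix.isUnit_det_of_right_inverse (B := snf.bM.toMatrix (Pi.basisFun ℤ (Fin m)))
    exact Module.Basis.toMatrix_mul_toMatrix_flip _ _
  have hCB : C = (B.submatrix id σ) * Matrix.diagonal snf.a := by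
    ext k i
    rw [Matrix.mul_diagonal]
    have h := congrFun (snf.snf i) k
    simp only [Pi.smul_apply, smul_eq_mul] at h
    simp only [hC0, Matrix.of_apply, Matrix.submatrix_apply, id_eq, hB,
      Module.Basis.toMatrix_apply, Pi.basisFun_repr, hσ, Equiv.ofBijective_apply]
    rw [h, mul_comm]
  set ε : ℤ := (B.submatrix id ⇑σ).det with hε
  have hdet : ∀ g : Fin m → Fin n, (M.submatrix id g).det
      = (ε * ∏ i, snf.a i) * (X0.submatrix id g).det := by
    intro g
    have hsub : M.submatrix id g = C * (X0.submatrix id g) := by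
      ext k j
      simp [hMC, Matrix.mul_apply, Matrix.submatrix_apply]
    rw [hsub, Matrix.det_mul, hCB, Matrix.det_mul, Matrix.det_diagonal]
  have hεabs : ε.natAbs = 1 := by
    rcases Int.units_eq_one_or (Equiv.Perm.sign σ) with h | h <;>
      rw [hε, Matrix.det_permute' σ B, h] <;>
      simp [Int.natAbs_mul, Int.natAbs_of_isUnit hBunit]
  have habs : ∀ g : Fin m → Fin n, (M.submatrix id g).det.natAbs
      = (∏ i, snf.a i).natAbs * (X0.submatrix id g).det.natAbs := by
    intro g
    rw [hdet g, Int.natAbs_mul, Int.natAbs_mul, hεabs, one_mul]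
  -- right inverse Y of X0
  have hySel : ∀ i : Fin m, ∃ y : Fin n → ℤ, M.mulVecLin y = (snf.bN i : Fin m → ℤ) :=
    fun i => (snf.bN i).2
  choose y hy using hySel
  have hXY : X0 * (Matrix.of fun j i => y i j) = 1 := by
    ext i i'
    have hs : (⟨(snf.bN i' : Fin m → ℤ), (snf.bN i').2⟩ : N)
        = ∑ j, y i' j • (⟨fun k => M k j, hcol j⟩ : N) := by
      apply Subtype.ext
      simp only [AddSubmonoidClass.coe_finset_sum, SetLike.val_smul]
      rw [← hy i']
      ext k
      simp [Matrix.mulVecLin_apply, Matrix.mulVec, dotProduct, Finset.sum_apply,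
        mul_comm]
    have h1 := congrArg (fun z : N => snf.bN.repr z i) hs
    simp only [map_sum, map_smul, Finsupp.coe_finset_sum, Finsupp.coe_smul, Finset.sum_apply,
      Pi.smul_apply, smul_eq_mul] at h1
    have h2 : (⟨(snf.bN i' : Fin m → ℤ), (snf.bN i').2⟩ : N) = snf.bN i' := rfl
    rw [h2, snf.bN.repr_self] at h1
    rw [Matrix.mul_apply, Matrix.one_apply]
    have h3 : ∑ j, X0 i j * (Matrix.of fun j i => y i j) j i'
        = ∑ j, y i' j * (snf.bN.repr ⟨fun k => M k j, hcol j⟩) i :=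
      Finset.sum_congr rfl fun j _ => by
        simp only [hX0, Matrix.of_apply]; ring
    rw [h3, ← h1, Finsupp.single_apply]
    by_cases h : i' = i
    · subst h; simp
    · rw [if_neg h, if_neg fun hh => h hh.symm]
  have hexp := det_mul_expand X0 (Matrix.of fun j i => y i j)
  rw [hXY, Matrix.det_one] at hexp
  rw [card_solutions M (by rw [← hN]; exact hidx0)]
  rw [← hN]
  refine Nat.dvd_antisymm ?_ ?_
  · rw [hidx]
    refine Finset.dvd_gcd fun g hg => ?_
    rw [habs g]
    exact dvd_mul_right _ _
  · set G := Finset.gcd (Finset.univ.filter fun g : Fin m → Fin n =>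
      (M.submatrix id g).det ≠ 0) (fun g => (M.submatrix id g).det.natAbs) with hG
    have hdvd1 : ∀ g : Fin m → Fin n, (G : ℤ) ∣ (M.submatrix id g).det := by
      intro g
      by_cases h0 : (M.submatrix id g).det = 0
      · rw [h0]; exact dvd_zero _
      · have hgmem : g ∈ Finset.univ.filter fun g : Fin m → Fin n =>
            (M.submatrix id g).det ≠ 0 :=
          Finset.mem_filter.mpr ⟨Finset.mem_univ g, h0⟩
        have h1 : G ∣ (M.submatrix id g).det.natAbs := hG ▸ Finset.gcd_dvd hgmem
        exact dvd_trans (Int.natCast_dvd_natCast.mpr h1) (Int.natAbs_dvd.mpr dvd_rfl)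
    have hsum : ε * (∏ i, snf.a i)
        = ∑ g : Fin m → Fin n,
            (∏ i, (Matrix.of fun j i => y i j) (g i) i) * (M.submatrix id g).det := by
      calc ε * ∏ i, snf.a i = (ε * ∏ i, snf.a i) * 1 := (mul_one _).symm
        _ = (ε * ∏ i, snf.a i) * ∑ g : Fin m → Fin n,
              (∏ i, (Matrix.of fun j i => y i j) (g i) i) * (X0.submatrix id g).det := by
            rw [← hexp]
        _ = ∑ g : Fin m → Fin n, (∏ i, (Matrix.of fun j i => y i j) (g i) i)
              * ((ε * ∏ i, snf.a i) * (X0.submatrix id g).det) := by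
            rw [Finset.mul_sum]
            exact Finset.sum_congr rfl fun g _ => by ring
        _ = _ := Finset.sum_congr rfl fun g _ => by rw [hdet g]
    have h2 : (G : ℤ) ∣ ε * ∏ i, snf.a i :=
      hsum ▸ Finset.dvd_sum fun g _ => (hdvd1 g).mul_left _
    have h3 : G ∣ (ε * ∏ i, snf.a i).natAbs := by
      have h4 := Int.natAbs_dvd_natAbs.mpr h2
      simpa using h4
    rw [hidx]
    rwa [Int.natAbs_mul, hεabs, one_mul] at h3
end

section
/- Let M be an s×n integer matrix (n ≥ s ≥ 1) whose columns m₁,…,m_n span ℝˢ and whose convex hull does not contain the origin, and let Ω be a fundamental M-cone. Then every α ∈ closure(Ω) ∩ ℤˢ belongs to Ω − [[M]]; that is, closure(Ω) ∩ ℤˢ ⊆ v(Ω|M) := ℤˢ ∩ (Ω − [[M]]). -/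
/-- The `j`-th column of `M`, as a vector of `ℝˢ`. -/
def col (s n : ℕ) (M : Matrix (Fin s) (Fin n) ℤ) (j : Fin n) : Fin s → ℝ :=
  fun i => (M i j : ℝ)

/-- The cone spanned by the columns of `M` with indices in `J`. -/
def coneOf (s n : ℕ) (M : Matrix (Fin s) (Fin n) ℤ) (J : Finset (Fin n)) :
    Set (Fin s → ℝ) :=
  {x | ∃ a : Fin n → ℝ, (∀ j, 0 ≤ a j) ∧ (∀ j ∉ J, a j = 0) ∧ x = ∑ j, a j • col s n M j}

/-- `c(M)`: the union of `cone(M∖Y)` over column subsets `Y` with `M∖Y` not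
spanning `ℝˢ`. -/
def badSet (s n : ℕ) (M : Matrix (Fin s) (Fin n) ℤ) : Set (Fin s → ℝ) :=
  ⋃ J ∈ {J : Finset (Fin n) | Submodule.span ℝ (col s n M '' ↑J) ≠ ⊤}, coneOf s n M J

/-- `Ω` is a fundamental `M`-cone: a connected component of `cone°(M) ∖ c(M)`. -/
def IsFundCone (s n : ℕ) (M : Matrix (Fin s) (Fin n) ℤ) (Ω : Set (Fin s → ℝ)) : Prop :=
  ∃ x ∈ interior (coneOf s n M Finset.univ) \ badSet s n M,
    Ω = connectedComponentIn (interior (coneOf s n M Finset.univ) \ badSet s n M) x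

section AuxLemmas

variable (s n : ℕ) (M : Matrix (Fin s) (Fin n) ℤ)

lemma coneOf_smul_mem {J : Finset (Fin n)} {x : Fin s → ℝ} {c : ℝ}
    (hx : x ∈ coneOf s n M J) (hc : 0 ≤ c) : c • x ∈ coneOf s n M J := by
  obtain ⟨a, h0, hJ, rfl⟩ := hx
  refine ⟨c • a, fun j => mul_nonneg hc (h0 j), fun j hj => by simp [hJ j hj], ?_⟩
  rw [Finset.smul_sum]
  simp [smul_smul]

lemma convex_coneOf (J : Finset (Fin n)) : Convex ℝ (coneOf s n M J) := by
  rintro x ⟨ax, hax0, haxJ, rfl⟩ y ⟨ay, hay0, hayJ, rfl⟩ p q hp hq hpq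
  refine ⟨fun j => p * ax j + q * ay j,
    fun j => add_nonneg (mul_nonneg hp (hax0 j)) (mul_nonneg hq (hay0 j)),
    fun j hj => by simp [haxJ j hj, hayJ j hj], ?_⟩
  rw [Finset.smul_sum, Finset.smul_sum, ← Finset.sum_add_distrib]
  simp [smul_smul, add_smul]

lemma coneOf_mem_span {J : Finset (Fin n)} {x : Fin s → ℝ}
    (hx : x ∈ coneOf s n M J) : x ∈ Submodule.span ℝ (col s n M '' ↑J) := by
  obtain ⟨a, h0, hJ, rfl⟩ := hx
  rw [← Finset.sum_subset (Finset.subset_univ J) (fun j _ hj => by rw [hJ j hj, zero_smul])]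
  exact Submodule.sum_mem _ fun j hj =>
    Submodule.smul_mem _ _ (Submodule.subset_span ⟨j, hj, rfl⟩)

/-- The simplex of coefficient vectors supported on `J` with total mass 1. -/
def simpl (J : Finset (Fin n)) : Set (Fin n → ℝ) :=
  {a | (∀ j, 0 ≤ a j) ∧ (∀ j ∉ J, a j = 0) ∧ ∑ j, a j = 1}

lemma isCompact_simpl (J : Finset (Fin n)) : IsCompact (simpl n J) := by
  rw [Metric.isCompact_iff_isClosed_bounded]
  constructor
  · have h1 : IsClosed {a : Fin n → ℝ | ∀ j, 0 ≤ a j} := by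
      have : {a : Fin n → ℝ | ∀ j, 0 ≤ a j} = ⋂ j, {a | 0 ≤ a j} := by ext; simp
      rw [this]
      exact isClosed_iInter fun j => isClosed_le continuous_const (continuous_apply j)
    have h2 : IsClosed {a : Fin n → ℝ | ∀ j ∉ J, a j = 0} := by
      have : {a : Fin n → ℝ | ∀ j ∉ J, a j = 0} = ⋂ j, ⋂ (_ : j ∉ J), {a | a j = 0} := by
        ext; simp
      rw [this]
      exact isClosed_iInter fun j => isClosed_iInter fun _ =>
        isClosed_eq (continuous_apply j) continuous_const
    have h3 : IsClosed {a : Fin n → ℝ | ∑ j, a j = 1} :=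
      isClosed_eq (by continuity) continuous_const
    have : simpl n J = {a : Fin n → ℝ | ∀ j, 0 ≤ a j} ∩
        ({a | ∀ j ∉ J, a j = 0} ∩ {a | ∑ j, a j = 1}) := by
      ext a; simp [simpl, and_assoc]
    rw [this]
    exact h1.inter (h2.inter h3)
  · refine Metric.isBounded_closedBall (x := (0 : Fin n → ℝ)) (r := 1) |>.subset ?_
    rintro a ⟨h0, _, hsum⟩
    rw [Metric.mem_closedBall, dist_zero_right]
    refine pi_norm_le_iff_of_nonneg zero_le_one |>.2 fun j => ?_
    rw [Real.norm_eq_abs, abs_of_nonneg (h0 j), ← hsum]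
    exact Finset.single_le_sum (fun i _ => h0 i) (Finset.mem_univ j)

theorem isClosed_coneOf
    (hhull : (0 : Fin s → ℝ) ∉ convexHull ℝ (Set.range (col s n M)))
    (J : Finset (Fin n)) : IsClosed (coneOf s n M J) := by
  rcases J.eq_empty_or_nonempty with rfl | ⟨j₀, hj₀⟩
  · have : coneOf s n M ∅ = {0} := by
      ext x
      constructor
      · rintro ⟨a, h0, hz, rfl⟩
        have : ∀ j, a j = 0 := fun j => hz j (Finset.notMem_empty j)
        simp [this]
      · rintro rfl
        exact ⟨0, by simp, by simp, by simp⟩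
    rw [this]
    exact isClosed_singleton
  · set K : Set (Fin s → ℝ) := (fun a : Fin n → ℝ => ∑ j, a j • col s n M j) '' simpl n J
      with hK
    have hLcont : Continuous (fun a : Fin n → ℝ => ∑ j, a j • col s n M j) := by
      continuity
    have hKcpt : IsCompact K := (isCompact_simpl n J).image hLcont
    have hKne : K.Nonempty := by
      refine ⟨_, ⟨fun j => if j = j₀ then 1 else 0, ⟨?_, ?_, ?_⟩, rfl⟩⟩
      · intro j; dsimp only; split <;> norm_num
      · intro j hj; dsimp only; split
        · next h => exact absurd (h ▸ hj₀) hj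
        · rfl
      · simp
    have hK0 : (0 : Fin s → ℝ) ∉ K := by
      rintro ⟨a, ⟨h0, hz, hsum⟩, ha⟩
      apply hhull
      have hmem := Finset.centerMass_mem_convexHull (Finset.univ)
        (w := a) (z := col s n M) (fun j _ => h0 j) (by rw [hsum]; norm_num)
        (fun j _ => Set.mem_range_self j)
      rwa [Finset.centerMass, hsum, inv_one, one_smul,
        show ∑ i, a i • col s n M i = 0 from ha] at hmem
    set d : ℝ := Metric.infDist 0 K with hd
    have hd0 : 0 < d := (hKcpt.isClosed.notMem_iff_infDist_pos hKne).1 hK0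
    have hdle : ∀ k ∈ K, d ≤ ‖k‖ := by
      intro k hk
      calc d ≤ dist 0 k := Metric.infDist_le_dist_of_mem hk
        _ = ‖k‖ := by rw [dist_zero_left]
    have hrep : ∀ x ∈ coneOf s n M J, ∃ r : ℝ, ∃ k ∈ K, 0 ≤ r ∧ x = r • k ∧ r * d ≤ ‖x‖ := by
      rintro x ⟨a, h0, hz, rfl⟩
      have hr0 : 0 ≤ ∑ j, a j := Finset.sum_nonneg fun j _ => h0 j
      rcases eq_or_lt_of_le hr0 with heq | hlt
      · obtain ⟨k, hk⟩ := hKne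
        have hz' : ∀ j, a j = 0 := fun j =>
          (Finset.sum_eq_zero_iff_of_nonneg (fun i _ => h0 i)).1 heq.symm j (Finset.mem_univ j)
        exact ⟨0, k, hk, le_refl 0, by simp [hz'], by simp [norm_nonneg]⟩
      · set r : ℝ := ∑ j, a j with hr
        have hrinv : ∑ j, (r⁻¹ • a) j = 1 := by
          simp only [Pi.smul_apply, smul_eq_mul, ← Finset.mul_sum]
          exact inv_mul_cancel₀ hlt.ne'
        have hkK : (fun b : Fin n → ℝ => ∑ j, b j • col s n M j) (r⁻¹ • a) ∈ K :=
          ⟨r⁻¹ • a, ⟨fun j => mul_nonneg (inv_nonneg.2 hr0) (h0 j),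
            fun j hj => by simp [hz j hj], hrinv⟩, rfl⟩
        have hxk : ∑ j, a j • col s n M j
            = r • (fun b : Fin n → ℝ => ∑ j, b j • col s n M j) (r⁻¹ • a) := by
          dsimp only
          rw [Finset.smul_sum]
          congr 1
          funext j
          rw [Pi.smul_apply, smul_eq_mul, smul_smul, mul_inv_cancel_left₀ hlt.ne']
        refine ⟨r, _, hkK, hr0, hxk, ?_⟩
        rw [hxk, norm_smul, Real.norm_eq_abs, abs_of_nonneg hr0]
        exact mul_le_mul_of_nonneg_left (hdle _ hkK) hr0
    refine isClosed_of_closure_subset ?_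
    intro x hx
    set B : ℝ := ‖x‖ + 1 with hB
    have hxcl : x ∈ closure (Metric.ball x 1 ∩ coneOf s n M J) :=
      Metric.isOpen_ball.inter_closure ⟨Metric.mem_ball_self one_pos, hx⟩
    set F : Set (Fin s → ℝ) :=
      (fun p : ℝ × (Fin s → ℝ) => p.1 • p.2) '' (Set.Icc (0:ℝ) (B/d) ×ˢ K) with hF
    have hsub : Metric.ball x 1 ∩ coneOf s n M J ⊆ F := by
      rintro z ⟨hz1, hz2⟩
      obtain ⟨r, k, hk, hr0, rfl, hrd⟩ := hrep z hz2
      refine ⟨(r, k), ⟨⟨hr0, ?_⟩, hk⟩, rfl⟩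
      rw [le_div_iff₀ hd0]
      have h1 : dist (r • k) x < 1 := Metric.mem_ball.1 hz1
      have h2 : ‖r • k‖ ≤ ‖x‖ + ‖r • k - x‖ := by
        have := norm_add_le x (r • k - x); simpa using this
      rw [← dist_eq_norm] at h2
      calc r * d ≤ ‖r • k‖ := hrd
        _ ≤ ‖x‖ + 1 := by linarith
    have hFcpt : IsCompact F :=
      (isCompact_Icc.prod hKcpt).image (continuous_fst.smul continuous_snd)
    have hxF : x ∈ F := hFcpt.isClosed.closure_subset ((closure_mono hsub) hxcl)
    obtain ⟨⟨r, k⟩, ⟨⟨hr0, -⟩, hk⟩, rfl⟩ := hxF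
    obtain ⟨a, ⟨ha0, haJ, -⟩, hak⟩ := hk
    refine ⟨r • a, fun j => mul_nonneg hr0 (ha0 j), fun j hj => by simp [haJ j hj], ?_⟩
    dsimp only at hak ⊢
    rw [← hak, Finset.smul_sum]
    congr 1
    funext j
    rw [Pi.smul_apply, smul_eq_mul, smul_smul]

theorem isClosed_badSet
    (hhull : (0 : Fin s → ℝ) ∉ convexHull ℝ (Set.range (col s n M))) :
    IsClosed (badSet s n M) :=
  Set.Finite.isClosed_biUnion (Set.toFinite _) fun J _ => isClosed_coneOf s n M hhull J

lemma exists_functional (V : Submodule ℝ (Fin s → ℝ)) (hV : V ≠ ⊤) :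
    ∃ φ : (Fin s → ℝ) →ₗ[ℝ] ℝ, φ ≠ 0 ∧ ∀ v ∈ V, φ v = 0 := by
  obtain ⟨x, hx⟩ : ∃ x, x ∉ V := by
    by_contra h
    push_neg at h
    exact hV (Submodule.eq_top_iff'.2 h)
  have hq : Submodule.Quotient.mk (p := V) x ≠ 0 := by
    simpa [Submodule.Quotient.mk_eq_zero] using hx
  obtain ⟨g, hg⟩ : ∃ g : Module.Dual ℝ ((Fin s → ℝ) ⧸ V), g (Submodule.Quotient.mk x) ≠ 0 := by
    by_contra h
    push_neg at h
    exact hq ((Module.forall_dual_apply_eq_zero_iff ℝ _).1 h)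
  refine ⟨g ∘ₗ V.mkQ, ?_, fun v hv => ?_⟩
  · intro h0
    apply hg
    have : (g ∘ₗ V.mkQ) x = 0 := by rw [h0]; rfl
    simpa [Submodule.mkQ_apply] using this
  · simp [Submodule.mkQ_apply, (Submodule.Quotient.mk_eq_zero V).2 hv]

end AuxLemmas

/-- Every lattice point of `closure(Ω)` lies in `Ω - [[M]]`, where `[[M]]` is the
zonotope spanned by the columns of `M`:
`closure(Ω) ∩ ℤˢ ⊆ v(Ω|M) = ℤˢ ∩ (Ω - [[M]])`. -/
theorem closure_lattice_subset_vSet (s n : ℕ) (hs : 1 ≤ s) (hn : s ≤ n)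
    (M : Matrix (Fin s) (Fin n) ℤ)
    (hspan : Submodule.span ℝ (Set.range (col s n M)) = ⊤)
    (hhull : (0 : Fin s → ℝ) ∉ convexHull ℝ (Set.range (col s n M)))
    (Ω : Set (Fin s → ℝ)) (hΩ : IsFundCone s n M Ω) :
    ∀ α : Fin s → ℤ, (fun i => (α i : ℝ)) ∈ closure Ω →
      ∃ ω ∈ Ω, ∃ a : Fin n → ℝ, (∀ j, a j ∈ Set.Icc (0 : ℝ) 1) ∧
        (fun i => (α i : ℝ)) = ω - ∑ j, a j • col s n M j := by
  classical
  open Pointwise in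
  intro α hα
  obtain ⟨x₀, hx₀, hΩeq⟩ := hΩ
  set αv : Fin s → ℝ := fun i => (α i : ℝ) with hαvdef
  set C : Set (Fin s → ℝ) := coneOf s n M Finset.univ with hCdef
  set U : Set (Fin s → ℝ) := interior C \ badSet s n M with hUdef
  have hUopen : IsOpen U := isOpen_interior.sdiff (isClosed_badSet s n M hhull)
  have hΩopen : IsOpen Ω := by rw [hΩeq]; exact hUopen.connectedComponentIn
  have hΩU : Ω ⊆ U := by rw [hΩeq]; exact connectedComponentIn_subset _ _
  -- the bad index type and separating functionals
  set ι := {J : Finset (Fin n) // Submodule.span ℝ (col s n M '' (↑J : Set (Fin n))) ≠ ⊤}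
    with hιdef
  choose φ hφ0 hφker using fun i : ι =>
    exists_functional s (Submodule.span ℝ (col s n M '' (↑i.1 : Set (Fin n)))) i.2
  -- the dense set where no functional vanishes
  set D : Set (Fin s → ℝ) := ⋂ i : ι, {x : Fin s → ℝ | φ i x ≠ 0} with hDdef
  have hDdense : Dense D := by
    apply dense_iInter_of_isOpen
    · intro i
      have : {x : Fin s → ℝ | φ i x ≠ 0} = {x | φ i x = 0}ᶜ := by ext; simp
      rw [this]
      exact (isClosed_eq (φ i).continuous_of_finiteDimensional continuous_const).isOpen_compl
    · intro i
      have hset : {x : Fin s → ℝ | φ i x ≠ 0} = ({x | φ i x = 0} : Set (Fin s → ℝ))ᶜ := by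
        ext; simp
      rw [hset, ← interior_eq_empty_iff_dense_compl]
      by_contra hne
      have hker : ({x : Fin s → ℝ | φ i x = 0} : Set (Fin s → ℝ))
          = (LinearMap.ker (φ i) : Set (Fin s → ℝ)) := by
        ext z; simp [LinearMap.mem_ker]
      rw [hker] at hne
      have : LinearMap.ker (φ i) = ⊤ :=
        Submodule.eq_top_of_nonempty_interior' _ (Set.nonempty_iff_ne_empty.2 hne)
      exact hφ0 i (LinearMap.ker_eq_top.1 this)
  -- α is in the closure of Ω ∩ D
  have hΩD : Ω ⊆ closure (Ω ∩ D) := by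
    intro z hz
    rw [mem_closure_iff]
    intro o ho hzo
    obtain ⟨w, hwD, hwo⟩ := hDdense.exists_mem_open (ho.inter hΩopen) ⟨z, hzo, hz⟩
    exact ⟨w, hwo.1, hwo.2, hwD⟩
  have hαD : αv ∈ closure (Ω ∩ D) := closure_minimal hΩD isClosed_closure hα
  -- sign-pattern cones
  set P : (ι → Bool) → Set (Fin s → ℝ) := fun σ =>
    interior C ∩ ⋂ i : ι, {x | 0 < (if σ i then (1:ℝ) else -1) * φ i x} with hPdef
  have hcover : Ω ∩ D ⊆ ⋃ σ : ι → Bool, Ω ∩ P σ := by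
    rintro z ⟨hzΩ, hzD⟩
    refine Set.mem_iUnion.2 ⟨fun i => decide (0 < φ i z), hzΩ, (hΩU hzΩ).1,
      Set.mem_iInter.2 fun i => ?_⟩
    have hne : φ i z ≠ 0 := Set.mem_iInter.1 hzD i
    show 0 < (if decide (0 < φ i z) = true then (1:ℝ) else -1) * φ i z
    by_cases h : 0 < φ i z
    · rw [decide_eq_true h, if_pos rfl, one_mul]
      exact h
    · have hlt : φ i z < 0 := lt_of_le_of_ne (not_lt.1 h) hne
      rw [decide_eq_false h, if_neg (by simp)]
      nlinarith
  have h3 : αv ∈ ⋃ σ : ι → Bool, closure (Ω ∩ P σ) := by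
    have hclosed : IsClosed (⋃ σ : ι → Bool, closure (Ω ∩ P σ)) :=
      isClosed_iUnion_of_finite fun _ => isClosed_closure
    have hsub : Ω ∩ D ⊆ ⋃ σ : ι → Bool, closure (Ω ∩ P σ) := fun z hz => by
      obtain ⟨σ, hσ⟩ := Set.mem_iUnion.1 (hcover hz)
      exact Set.mem_iUnion.2 ⟨σ, subset_closure hσ⟩
    exact closure_minimal hsub hclosed hαD
  obtain ⟨σ, hσ⟩ := Set.mem_iUnion.1 h3
  -- properties of P σ
  have hPopen : IsOpen (P σ) := by
    refine isOpen_interior.inter (isOpen_iInter_of_finite fun i => ?_)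
    exact isOpen_lt continuous_const
      (continuous_const.mul (φ i).continuous_of_finiteDimensional)
  have hPconvex : Convex ℝ (P σ) := by
    refine (convex_coneOf s n M Finset.univ).interior.inter (convex_iInter fun i => ?_)
    exact convex_halfSpace_gt
      ⟨fun a b => by rw [map_add, mul_add],
       fun t a => by simp only [map_smul, smul_eq_mul]; ring⟩ 0
  have hPU : P σ ⊆ U := by
    rintro z ⟨hz1, hz2⟩
    refine ⟨hz1, fun hbad => ?_⟩
    obtain ⟨J, hJ, hzJ⟩ := Set.mem_iUnion₂.1 hbad
    have h0 : φ ⟨J, hJ⟩ z = 0 := hφker ⟨J, hJ⟩ z (coneOf_mem_span s n M hzJ)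
    have := Set.mem_iInter.1 hz2 ⟨J, hJ⟩
    rw [Set.mem_setOf_eq, h0, mul_zero] at this
    exact lt_irrefl 0 this
  have hPne : (Ω ∩ P σ).Nonempty := by
    by_contra h
    rw [Set.not_nonempty_iff_eq_empty] at h
    rw [h, closure_empty] at hσ
    exact hσ
  obtain ⟨y, hyΩ, hyP⟩ := hPne
  have hαP : αv ∈ closure (P σ) := closure_mono Set.inter_subset_right hσ
  have hPΩ : P σ ⊆ Ω := by
    have h1 : P σ ⊆ connectedComponentIn U y :=
      hPconvex.isPreconnected.subset_connectedComponentIn hyP hPU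
    have h2 : connectedComponentIn U y = Ω := by
      have hy' : y ∈ connectedComponentIn U x₀ := by rw [← hΩeq]; exact hyΩ
      rw [hΩeq]
      exact (connectedComponentIn_eq hy').symm
    rw [← h2]
    exact h1
  -- scaling invariance
  have hCsmul : ∀ t : ℝ, 0 < t → t • C = C := by
    intro t ht
    apply Set.Subset.antisymm
    · rintro _ ⟨z, hz, rfl⟩
      exact coneOf_smul_mem s n M hz ht.le
    · intro z hz
      exact ⟨t⁻¹ • z, coneOf_smul_mem s n M hz (inv_nonneg.2 ht.le), smul_inv_smul₀ ht.ne' z⟩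
  have hPsmul : ∀ t : ℝ, 0 < t → ∀ z ∈ P σ, t • z ∈ P σ := by
    intro t ht z hz
    refine ⟨?_, Set.mem_iInter.2 fun i => ?_⟩
    · have h1 : t • z ∈ t • interior C := Set.smul_mem_smul_set hz.1
      rwa [← interior_smul₀ ht.ne' C, hCsmul t ht] at h1
    · have h2 := Set.mem_iInter.1 hz.2 i
      rw [Set.mem_setOf_eq] at h2 ⊢
      rw [map_smul, smul_eq_mul, mul_left_comm]
      exact mul_pos ht h2
  -- the ball around y inside the cone
  obtain ⟨ρ, hρ0, hball⟩ : ∃ ρ > 0, Metric.ball y ρ ⊆ C := by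
    obtain ⟨ρ, hρ0, hball⟩ := Metric.mem_nhds_iff.1 (mem_interior_iff_mem_nhds.1 hyP.1)
    exact ⟨ρ, hρ0, hball⟩
  set c : ℝ := ‖αv‖ / ρ + 1 with hcdef
  have hc0 : 0 < c := by positivity
  have hu : c • y - αv ∈ C := by
    have h1 : y - c⁻¹ • αv ∈ C := by
      apply hball
      rw [Metric.mem_ball, dist_eq_norm]
      have : y - c⁻¹ • αv - y = -(c⁻¹ • αv) := by abel
      rw [this, norm_neg, norm_smul, Real.norm_eq_abs, abs_of_nonneg (inv_nonneg.2 hc0.le)]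
      rw [inv_mul_lt_iff₀ hc0]
      have hlt2 : ‖αv‖ < c * ρ := by
        rw [hcdef, add_mul, one_mul, div_mul_cancel₀ _ hρ0.ne']
        linarith
      exact hlt2
    have h2 : c • (y - c⁻¹ • αv) ∈ C := coneOf_smul_mem s n M h1 hc0.le
    rwa [smul_sub, smul_smul, mul_inv_cancel₀ hc0.ne', one_smul] at h2
  obtain ⟨b, hb0, -, hbu⟩ := hu
  set r : ℝ := (1 + ∑ j, b j)⁻¹ with hrdef
  have hbs0 : 0 ≤ ∑ j, b j := Finset.sum_nonneg fun j _ => hb0 j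
  have hr0 : 0 < r := by positivity
  have hr1 : r ≤ 1 := by
    rw [hrdef]
    rw [inv_le_one_iff₀]
    right; linarith
  set w : ℝ := 1 - r + r * c with hwdef
  have hw0 : 0 < w := by nlinarith
  -- the point q and ω
  have hq : (w⁻¹ * (r * c)) • y + (w⁻¹ * (1 - r)) • αv ∈ interior (P σ) := by
    apply hPconvex.combo_interior_closure_mem_interior
    · rwa [hPopen.interior_eq]
    · exact hαP
    · positivity
    · have : (0:ℝ) ≤ 1 - r := by linarith
      positivity
    · rw [← mul_add]
      have : r * c + (1 - r) = w := by rw [hwdef]; ring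
      rw [this, inv_mul_cancel₀ hw0.ne']
  rw [hPopen.interior_eq] at hq
  set ω : Fin s → ℝ := w • ((w⁻¹ * (r * c)) • y + (w⁻¹ * (1 - r)) • αv) with hωdef
  have hωP : ω ∈ P σ := hPsmul w hw0 _ hq
  have hωΩ : ω ∈ Ω := hPΩ hωP
  have hω : ω = (r * c) • y + (1 - r) • αv := by
    rw [hωdef, smul_add, smul_smul, smul_smul, mul_inv_cancel_left₀ hw0.ne',
      mul_inv_cancel_left₀ hw0.ne']
  refine ⟨ω, hωΩ, fun j => r * b j, fun j => ⟨mul_nonneg hr0.le (hb0 j), ?_⟩, ?_⟩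
  · have h1 : b j ≤ ∑ i, b i := Finset.single_le_sum (fun i _ => hb0 i) (Finset.mem_univ j)
    have h2 : r * b j ≤ r * (1 + ∑ i, b i) := by
      apply mul_le_mul_of_nonneg_left _ hr0.le
      linarith
    rw [hrdef] at h2 ⊢
    rwa [inv_mul_cancel₀ (by positivity : (1:ℝ) + ∑ i, b i ≠ 0)] at h2
  · have hsum : ∑ j, (r * b j) • col s n M j = r • (c • y - αv) := by
      rw [hbu, Finset.smul_sum]
      congr 1
      funext j
      rw [smul_smul]
    show αv = ω - ∑ j, (r * b j) • col s n M j
    rw [hsum, hω]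
    module
end
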